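/- arXiv:math/0209271 — 3 statements merged into one kernel-verified Lean document; each statement's English description precedes it below -/
import Mathlib

section
/- Let p be a prime with p ∤ α₁α₂α₃, and for B, C, F, G, H ∈ ℕ let d(B,C,F,G,H) = μ{(b,c) ∈ ℤ_p² : v(b) = B, v(c) = C, v(α₃ − c) ≥ G, v(α₁b + α₂) ≥ H, v(b³ − α₁b² − α₂b + c² − α₃c) ≥ F}. Suppose B ≥ 1 and C ≥ 1. Then: (i) if G ≥ 1 or H ≥ 1 then d(B,C,F,G,H) = 0; (ii) if F ≤ min{B,C} then d(B,C,F,0,0) = p^{−B−C}(1 − p^{−1})²; (iii) if F > min{B,C} and B ≠ C then d(B,C,F,0,0) = 0; (iv) if B = C and F > B then d(B,B,F,0,0) = p^{−F−B}(1 − p^{−1}). -/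
open MeasureTheory
open scoped ENNReal

/-- The set of pairs `(b,c) ∈ ℤ_p²` with `v(b) = B`, `v(c) = C`, `v(α₃ − c) ≥ G`,
`v(α₁b + α₂) ≥ H` and `v(b³ − α₁b² − α₂b + c² − α₃c) ≥ F` (valuation conditions are
expressed via divisibility by powers of `p`, with the convention `v(0) = ∞`). -/
def dSet (p : ℕ) [Fact p.Prime] (α₁ α₂ α₃ : ℤ) (B C F G H : ℕ) : Set (ℤ_[p] × ℤ_[p]) :=
  {bc : ℤ_[p] × ℤ_[p] |
    ((p : ℤ_[p]) ^ B ∣ bc.1 ∧ ¬ (p : ℤ_[p]) ^ (B + 1) ∣ bc.1) ∧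
    ((p : ℤ_[p]) ^ C ∣ bc.2 ∧ ¬ (p : ℤ_[p]) ^ (C + 1) ∣ bc.2) ∧
    (p : ℤ_[p]) ^ G ∣ ((α₃ : ℤ_[p]) - bc.2) ∧
    (p : ℤ_[p]) ^ H ∣ ((α₁ : ℤ_[p]) * bc.1 + (α₂ : ℤ_[p])) ∧
    (p : ℤ_[p]) ^ F ∣
      (bc.1 ^ 3 - (α₁ : ℤ_[p]) * bc.1 ^ 2 - (α₂ : ℤ_[p]) * bc.1
        + bc.2 ^ 2 - (α₃ : ℤ_[p]) * bc.2)}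

namespace Stmt7

set_option linter.unusedSectionVars false
set_option linter.unnecessarySimpa false

variable {p : ℕ} [hp : Fact p.Prime]

/-! ### Basic divisibility and norm helpers -/

lemma dvd_iff_norm (x : ℤ_[p]) (n : ℕ) :
    (p : ℤ_[p]) ^ n ∣ x ↔ ‖x‖ ≤ (p : ℝ) ^ (-(n : ℤ)) := by
  rw [PadicInt.norm_le_pow_iff_mem_span_pow, Ideal.mem_span_singleton]

lemma nat_dvd_iff (n j : ℕ) : (p : ℤ_[p]) ^ n ∣ (j : ℤ_[p]) ↔ p ^ n ∣ j := by
  have h : ((j : ℤ) : ℤ_[p]) = (j : ℤ_[p]) := by push_cast; ring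
  rw [← h, PadicInt.pow_p_dvd_int_iff]
  exact_mod_cast Iff.rfl

lemma eq_of_dvd_sub {n j k : ℕ} (hj : j < p ^ n) (hk : k < p ^ n)
    (h : (p : ℤ_[p]) ^ n ∣ ((j : ℤ_[p]) - (k : ℤ_[p]))) : j = k := by
  have hcast : (j : ℤ_[p]) - (k : ℤ_[p]) = (((j : ℤ) - (k : ℤ) : ℤ) : ℤ_[p]) := by
    push_cast; ring
  rw [hcast, PadicInt.pow_p_dvd_int_iff] at h
  have hz : (j : ℤ) - (k : ℤ) = 0 := by
    refine Int.eq_zero_of_abs_lt_dvd h ?_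
    have hj' : (j : ℤ) < (p : ℤ) ^ n := by exact_mod_cast hj
    have hk' : (k : ℤ) < (p : ℤ) ^ n := by exact_mod_cast hk
    have h0j : (0 : ℤ) ≤ j := Int.natCast_nonneg j
    have h0k : (0 : ℤ) ≤ k := Int.natCast_nonneg k
    rw [abs_sub_lt_iff]
    omega
  omega

lemma norm_eq_one_of_not_dvd {x : ℤ_[p]} (h : ¬ (p : ℤ_[p]) ∣ x) : ‖x‖ = 1 := by
  refine le_antisymm (PadicInt.norm_le_one x) ?_
  by_contra hlt
  exact h ((PadicInt.norm_lt_one_iff_dvd x).1 (lt_of_not_ge hlt))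

lemma norm_sub_eq_one {x y : ℤ_[p]} (hx : ‖x‖ < 1) (hy : ‖y‖ = 1) : ‖x - y‖ = 1 := by
  refine le_antisymm (PadicInt.norm_le_one _) ?_
  by_contra hlt
  have h1 : ‖y‖ < 1 := by
    have hxy : y = x - (x - y) := by ring
    rw [hxy, sub_eq_add_neg]
    refine lt_of_le_of_lt (PadicInt.nonarchimedean _ _) ?_
    rw [norm_neg]
    exact max_lt hx (lt_of_not_ge hlt)
  rw [hy] at h1; exact lt_irrefl _ h1

lemma dvd_of_le' {m n : ℕ} (h : m ≤ n) {x : ℤ_[p]} (hx : (p : ℤ_[p]) ^ n ∣ x) :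
    (p : ℤ_[p]) ^ m ∣ x := dvd_trans (pow_dvd_pow _ h) hx

lemma p_dvd_of_pow {n : ℕ} (hn : 1 ≤ n) {x : ℤ_[p]} (h : (p : ℤ_[p]) ^ n ∣ x) :
    (p : ℤ_[p]) ∣ x := by
  have := dvd_of_le' hn h
  rwa [pow_one] at this

lemma appr_dvd (n : ℕ) (x : ℤ_[p]) : (p : ℤ_[p]) ^ n ∣ (x - (x.appr n : ℤ_[p])) :=
  (Ideal.mem_span_singleton).1 (PadicInt.appr_spec n x)

lemma exact_transfer {m n : ℕ} (hmn : m + 1 ≤ n) {x y : ℤ_[p]}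
    (hcong : (p : ℤ_[p]) ^ n ∣ x - y)
    (hx : (p : ℤ_[p]) ^ m ∣ x ∧ ¬ (p : ℤ_[p]) ^ (m + 1) ∣ x) :
    (p : ℤ_[p]) ^ m ∣ y ∧ ¬ (p : ℤ_[p]) ^ (m + 1) ∣ y := by
  constructor
  · have h : y = x - (x - y) := by ring
    rw [h]
    exact dvd_sub hx.1 (dvd_of_le' (le_trans (Nat.le_succ m) hmn) hcong)
  · intro h
    apply hx.2
    have hxe : x = (x - y) + y := by ring
    rw [hxe]
    exact dvd_add (dvd_of_le' hmn hcong) h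

/-! ### Cosets and their measure -/

def coset (p : ℕ) [Fact p.Prime] (N M : ℕ) (a b : ℤ_[p]) : Set (ℤ_[p] × ℤ_[p]) :=
  {x | (p : ℤ_[p]) ^ N ∣ (x.1 - a) ∧ (p : ℤ_[p]) ^ M ∣ (x.2 - b)}

lemma coset_eq_prod (N M : ℕ) (a b : ℤ_[p]) :
    coset p N M a b =
      (Metric.closedBall a ((p : ℝ) ^ (-(N : ℤ)))) ×ˢ
        (Metric.closedBall b ((p : ℝ) ^ (-(M : ℤ)))) := by
  ext x
  simp only [coset, Set.mem_setOf_eq, Set.mem_prod, Metric.mem_closedBall, dist_eq_norm]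
  rw [dvd_iff_norm, dvd_iff_norm]

lemma coset_measurable [MeasurableSpace ℤ_[p]] [BorelSpace ℤ_[p]] (N M : ℕ) (a b : ℤ_[p]) :
    MeasurableSet (coset p N M a b) := by
  rw [coset_eq_prod]
  exact (Metric.isClosed_closedBall.measurableSet).prod (Metric.isClosed_closedBall.measurableSet)

variable [MeasurableSpace ℤ_[p]] [BorelSpace ℤ_[p]]
variable (μ : Measure (ℤ_[p] × ℤ_[p])) [μ.IsAddHaarMeasure]

lemma coset_translate (N M : ℕ) (a b : ℤ_[p]) :
    μ (coset p N M a b) = μ (coset p N M 0 0) := by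
  have h : coset p N M a b = (((-a, -b) : ℤ_[p] × ℤ_[p]) + ·) ⁻¹' (coset p N M 0 0) := by
    ext x
    simp only [coset, Set.mem_setOf_eq, Set.mem_preimage, Prod.fst_add, Prod.snd_add, sub_zero]
    constructor
    · rintro ⟨h1, h2⟩; exact ⟨by rwa [neg_add_eq_sub], by rwa [neg_add_eq_sub]⟩
    · rintro ⟨h1, h2⟩; exact ⟨by rwa [neg_add_eq_sub] at h1, by rwa [neg_add_eq_sub] at h2⟩
  rw [h, measure_preimage_add]

lemma coset_disjoint {N M : ℕ} {j k j' k' : ℕ} (hj : j < p ^ N) (hj' : j' < p ^ N)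
    (hk : k < p ^ M) (hk' : k' < p ^ M) (hne : (j, k) ≠ (j', k')) :
    Disjoint (coset p N M (j : ℤ_[p]) (k : ℤ_[p])) (coset p N M (j' : ℤ_[p]) (k' : ℤ_[p])) := by
  rw [Set.disjoint_left]
  rintro x ⟨h1, h2⟩ ⟨h1', h2'⟩
  apply hne
  have e1 : (j' : ℤ_[p]) - (j : ℤ_[p]) = (x.1 - j) - (x.1 - j') := by ring
  have e2 : (k' : ℤ_[p]) - (k : ℤ_[p]) = (x.2 - k) - (x.2 - k') := by ring
  have d1 : j' = j := eq_of_dvd_sub hj' hj (by rw [e1]; exact dvd_sub h1 h1')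
  have d2 : k' = k := eq_of_dvd_sub hk' hk (by rw [e2]; exact dvd_sub h2 h2')
  rw [d1, d2]

lemma measure_coset (hμ : μ Set.univ = 1) (N M : ℕ) (a b : ℤ_[p]) :
    μ (coset p N M a b) = ((p : ℝ≥0∞) ^ N * (p : ℝ≥0∞) ^ M)⁻¹ := by
  classical
  set T : Finset (ℕ × ℕ) := Finset.range (p ^ N) ×ˢ Finset.range (p ^ M) with hT
  have hcover : Set.univ = ⋃ jk ∈ T, coset p N M (jk.1 : ℤ_[p]) (jk.2 : ℤ_[p]) := by
    ext x
    simp only [Set.mem_univ, true_iff, Set.mem_iUnion]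
    refine ⟨(x.1.appr N, x.2.appr M), ?_, ?_, ?_⟩
    · simp [hT, Finset.mem_product, PadicInt.appr_lt]
    · exact (Ideal.mem_span_singleton).1 (PadicInt.appr_spec N x.1)
    · exact (Ideal.mem_span_singleton).1 (PadicInt.appr_spec M x.2)
  have hdisj : (T : Set (ℕ × ℕ)).PairwiseDisjoint
      (fun jk : ℕ × ℕ => coset p N M (jk.1 : ℤ_[p]) (jk.2 : ℤ_[p])) := by
    rintro ⟨j, k⟩ hjk ⟨j', k'⟩ hjk' hne
    simp only [hT, Finset.coe_product, Set.mem_prod, Finset.mem_coe, Finset.mem_range] at hjk hjk'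
    exact coset_disjoint hjk.1 hjk'.1 hjk.2 hjk'.2 hne
  have hsum : ∑ jk ∈ T, μ (coset p N M (jk.1 : ℤ_[p]) (jk.2 : ℤ_[p])) = 1 := by
    rw [← measure_biUnion_finset hdisj (fun jk _ => coset_measurable N M _ _), ← hcover, hμ]
  have hconst : ∀ jk ∈ T, μ (coset p N M (jk.1 : ℤ_[p]) (jk.2 : ℤ_[p])) = μ (coset p N M 0 0) :=
    fun jk _ => coset_translate μ N M _ _
  rw [Finset.sum_congr rfl hconst, Finset.sum_const, hT, Finset.card_product,
    Finset.card_range, Finset.card_range] at hsum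
  have hcard : ((p ^ N * p ^ M : ℕ) : ℝ≥0∞) * μ (coset p N M 0 0) = 1 := by
    rw [← hsum, nsmul_eq_mul]
  have hne0 : ((p ^ N * p ^ M : ℕ) : ℝ≥0∞) ≠ 0 := by
    simp [hp.out.pos.ne', pow_ne_zero]
  have hnetop : ((p ^ N * p ^ M : ℕ) : ℝ≥0∞) ≠ ⊤ := ENNReal.natCast_ne_top _
  have hval : μ (coset p N M 0 0) = ((p ^ N * p ^ M : ℕ) : ℝ≥0∞)⁻¹ := by
    calc μ (coset p N M 0 0)
        = (((p ^ N * p ^ M : ℕ) : ℝ≥0∞)⁻¹ * ((p ^ N * p ^ M : ℕ) : ℝ≥0∞)) *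
            μ (coset p N M 0 0) := by
          rw [ENNReal.inv_mul_cancel hne0 hnetop, one_mul]
      _ = ((p ^ N * p ^ M : ℕ) : ℝ≥0∞)⁻¹ * (((p ^ N * p ^ M : ℕ) : ℝ≥0∞) *
            μ (coset p N M 0 0)) := by rw [mul_assoc]
      _ = ((p ^ N * p ^ M : ℕ) : ℝ≥0∞)⁻¹ := by rw [hcard, mul_one]
  rw [coset_translate μ, hval]
  congr 1
  push_cast
  ring

lemma measure_biUnion_cosets (hμ : μ Set.univ = 1) (N M : ℕ) (T : Finset (ℕ × ℕ))
    (hT : ∀ jk ∈ T, jk.1 < p ^ N ∧ jk.2 < p ^ M) :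
    μ (⋃ jk ∈ T, coset p N M (jk.1 : ℤ_[p]) (jk.2 : ℤ_[p]))
      = T.card * ((p : ℝ≥0∞) ^ N * (p : ℝ≥0∞) ^ M)⁻¹ := by
  have hdisj : (T : Set (ℕ × ℕ)).PairwiseDisjoint
      (fun jk : ℕ × ℕ => coset p N M (jk.1 : ℤ_[p]) (jk.2 : ℤ_[p])) := by
    rintro ⟨j, k⟩ hjk ⟨j', k'⟩ hjk' hne
    obtain ⟨a1, a2⟩ := hT _ (Finset.mem_coe.1 hjk)
    obtain ⟨b1, b2⟩ := hT _ (Finset.mem_coe.1 hjk')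
    exact coset_disjoint a1 b1 a2 b2 hne
  rw [measure_biUnion_finset hdisj (fun jk _ => coset_measurable N M _ _)]
  rw [Finset.sum_congr rfl (fun jk _ => measure_coset μ hμ N M _ _), Finset.sum_const,
    nsmul_eq_mul]

/-! ### Counting -/

lemma card_filter_dvd (d m : ℕ) (hd : 0 < d) :
    ((Finset.range (d * m)).filter (fun j => d ∣ j)).card = m := by
  classical
  have himg : (Finset.range (d * m)).filter (fun j => d ∣ j)
      = (Finset.range m).image (fun t => d * t) := by
    ext a
    simp only [Finset.mem_filter, Finset.mem_range, Finset.mem_image]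
    constructor
    · rintro ⟨hlt, t, rfl⟩
      exact ⟨t, by exact (Nat.mul_lt_mul_left hd).1 hlt, rfl⟩
    · rintro ⟨t, ht, rfl⟩
      exact ⟨(Nat.mul_lt_mul_left hd).2 ht, ⟨t, rfl⟩⟩
  rw [himg, Finset.card_image_of_injective _ (fun a b h => Nat.eq_of_mul_eq_mul_left hd h),
    Finset.card_range]

lemma card_filter_exact (B n : ℕ) (hBn : B < n) :
    ((Finset.range (p ^ n)).filter (fun j => p ^ B ∣ j ∧ ¬ p ^ (B + 1) ∣ j)).card
      = p ^ (n - B) - p ^ (n - B - 1) := by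
  classical
  have hsplit : (Finset.range (p ^ n)).filter (fun j => p ^ B ∣ j ∧ ¬ p ^ (B + 1) ∣ j)
      = (Finset.range (p ^ n)).filter (fun j => p ^ B ∣ j)
        \ (Finset.range (p ^ n)).filter (fun j => p ^ (B + 1) ∣ j) := by
    ext a
    simp only [Finset.mem_filter, Finset.mem_sdiff, Finset.mem_range]
    constructor
    · rintro ⟨h1, h2, h3⟩; exact ⟨⟨h1, h2⟩, fun h => h3 h.2⟩
    · rintro ⟨⟨h1, h2⟩, h3⟩; exact ⟨h1, h2, fun h => h3 ⟨h1, h⟩⟩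
  have hsub : (Finset.range (p ^ n)).filter (fun j => p ^ (B + 1) ∣ j)
      ⊆ (Finset.range (p ^ n)).filter (fun j => p ^ B ∣ j) := by
    intro a
    simp only [Finset.mem_filter]
    rintro ⟨h1, h2⟩
    exact ⟨h1, dvd_trans (pow_dvd_pow _ (Nat.le_succ B)) h2⟩
  have h1 : ((Finset.range (p ^ n)).filter (fun j => p ^ B ∣ j)).card = p ^ (n - B) := by
    have hh : p ^ n = p ^ B * p ^ (n - B) := by
      rw [← pow_add]; congr 1; omega
    rw [hh, card_filter_dvd _ _ (pow_pos hp.out.pos B)]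
  have h2 : ((Finset.range (p ^ n)).filter (fun j => p ^ (B + 1) ∣ j)).card
      = p ^ (n - B - 1) := by
    have hh : p ^ n = p ^ (B + 1) * p ^ (n - B - 1) := by
      rw [← pow_add]; congr 1; omega
    rw [hh, card_filter_dvd _ _ (pow_pos hp.out.pos (B + 1))]
  rw [hsplit, Finset.card_sdiff_of_subset hsub, h1, h2]

lemma card_exact_succ (B : ℕ) :
    ((Finset.range (p ^ (B + 1))).filter (fun j => p ^ B ∣ j ∧ ¬ p ^ (B + 1) ∣ j)).card
      = p - 1 := by
  rw [card_filter_exact B (B + 1) (Nat.lt_succ_self B)]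
  have h1 : B + 1 - B = 1 := by omega
  rw [h1]; norm_num

/-! ### ENNReal arithmetic -/

lemma q0 : (p : ℝ≥0∞) ≠ 0 := by exact_mod_cast hp.out.pos.ne'
lemma qt : (p : ℝ≥0∞) ≠ ⊤ := ENNReal.natCast_ne_top p

lemma one_sub_inv : (1 : ℝ≥0∞) - (p : ℝ≥0∞)⁻¹ = ((p - 1 : ℕ) : ℝ≥0∞) * (p : ℝ≥0∞)⁻¹ := by
  rw [ENNReal.natCast_sub, Nat.cast_one,
    ENNReal.sub_mul (fun _ _ => ENNReal.inv_ne_top.2 q0), one_mul,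
    ENNReal.mul_inv_cancel q0 qt]

lemma qzpow (n : ℕ) : (p : ℝ≥0∞) ^ n = (p : ℝ≥0∞) ^ (n : ℤ) := (zpow_natCast _ n).symm

lemma qinv_pow (n : ℕ) : ((p : ℝ≥0∞) ^ n)⁻¹ = (p : ℝ≥0∞) ^ (-(n : ℤ)) := by
  rw [qzpow, ← ENNReal.zpow_neg (p : ℝ≥0∞)]

lemma qneg (n : ℕ) : (p : ℝ≥0∞) ^ (-(n : ℤ)) = ((p : ℝ≥0∞)⁻¹) ^ n := by
  rw [← qinv_pow, ENNReal.inv_pow]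

lemma qkey (a b : ℕ) : (p : ℝ≥0∞) ^ a * ((p : ℝ≥0∞)⁻¹) ^ (a + b) = ((p : ℝ≥0∞)⁻¹) ^ b := by
  rw [pow_add, ← mul_assoc, ← mul_pow, ENNReal.mul_inv_cancel q0 qt, one_pow, one_mul]

lemma enn2 (B C : ℕ) :
    (((p - 1) * (p - 1) : ℕ) : ℝ≥0∞) * ((p : ℝ≥0∞) ^ (B + 1) * (p : ℝ≥0∞) ^ (C + 1))⁻¹
      = (p : ℝ≥0∞) ^ (-(B : ℤ) - (C : ℤ)) * (1 - (p : ℝ≥0∞)⁻¹) ^ 2 := by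
  rw [show (-(B : ℤ) - (C : ℤ)) = -(((B + C : ℕ) : ℕ) : ℤ) by push_cast; ring, qneg, one_sub_inv,
    ENNReal.mul_inv (Or.inl (pow_ne_zero _ q0)) (Or.inl (ENNReal.pow_ne_top qt)),
    ENNReal.inv_pow, ENNReal.inv_pow, Nat.cast_mul]
  ring

lemma enn4 (B F : ℕ) (hBF : B < F) :
    ((p ^ (F - B) - p ^ (F - B - 1) : ℕ) : ℝ≥0∞) * ((p : ℝ≥0∞) ^ F * (p : ℝ≥0∞) ^ F)⁻¹
      = (p : ℝ≥0∞) ^ (-(F : ℤ) - (B : ℤ)) * (1 - (p : ℝ≥0∞)⁻¹) := by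
  have hnat : p ^ (F - B) - p ^ (F - B - 1) = p ^ (F - B - 1) * (p - 1) := by
    have h1 : F - B = (F - B - 1) + 1 := by omega
    rw [h1, pow_succ, Nat.add_sub_cancel, Nat.mul_sub, mul_one]
  rw [hnat, show (-(F : ℤ) - (B : ℤ)) = -(((F + B : ℕ) : ℕ) : ℤ) by push_cast; ring, qneg,
    one_sub_inv, ENNReal.mul_inv (Or.inl (pow_ne_zero _ q0)) (Or.inl (ENNReal.pow_ne_top qt)),
    ENNReal.inv_pow, Nat.cast_mul, Nat.cast_pow]
  rw [show ((p : ℝ≥0∞)⁻¹) ^ F * ((p : ℝ≥0∞)⁻¹) ^ F = ((p : ℝ≥0∞)⁻¹) ^ (F + F) by rw [pow_add],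
    show F + F = (F - B - 1) + ((F + B) + 1) by omega]
  rw [show (p : ℝ≥0∞) ^ (F - B - 1) * ((p - 1 : ℕ) : ℝ≥0∞) *
      ((p : ℝ≥0∞)⁻¹) ^ ((F - B - 1) + ((F + B) + 1)) =
      ((p - 1 : ℕ) : ℝ≥0∞) * ((p : ℝ≥0∞) ^ (F - B - 1) *
      ((p : ℝ≥0∞)⁻¹) ^ ((F - B - 1) + ((F + B) + 1))) by ring, qkey, pow_succ]
  ring

/-! ### Hensel root -/

lemma Q_congr (α₁ α₂ α₃ : ℤ) (F : ℕ) (b c b' c' : ℤ_[p])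
    (h1 : (p : ℤ_[p]) ^ F ∣ b - b') (h2 : (p : ℤ_[p]) ^ F ∣ c - c') :
    (p : ℤ_[p]) ^ F ∣
      (b ^ 3 - (α₁ : ℤ_[p]) * b ^ 2 - (α₂ : ℤ_[p]) * b + c ^ 2 - (α₃ : ℤ_[p]) * c)
      - (b' ^ 3 - (α₁ : ℤ_[p]) * b' ^ 2 - (α₂ : ℤ_[p]) * b' + c' ^ 2 - (α₃ : ℤ_[p]) * c') := by
  have key : (b ^ 3 - (α₁ : ℤ_[p]) * b ^ 2 - (α₂ : ℤ_[p]) * b + c ^ 2 - (α₃ : ℤ_[p]) * c)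
      - (b' ^ 3 - (α₁ : ℤ_[p]) * b' ^ 2 - (α₂ : ℤ_[p]) * b' + c' ^ 2 - (α₃ : ℤ_[p]) * c')
      = (b - b') * (b ^ 2 + b * b' + b' ^ 2 - (α₁ : ℤ_[p]) * (b + b') - (α₂ : ℤ_[p]))
        + (c - c') * (c + c' - (α₃ : ℤ_[p])) := by ring
  rw [key]
  exact dvd_add (h1.mul_right _) (h2.mul_right _)

lemma exists_root (α₁ α₂ α₃ : ℤ) (hα₂ : ¬ (p : ℤ_[p]) ∣ (α₂ : ℤ_[p]))
    (hα₃n : ‖(α₃ : ℤ_[p])‖ = 1) {B : ℕ} (hB : 1 ≤ B) {j : ℤ_[p]}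
    (hj : (p : ℤ_[p]) ^ B ∣ j) (hj2 : ¬ (p : ℤ_[p]) ^ (B + 1) ∣ j) :
    ∃ z : ℤ_[p], z ^ 2 - (α₃ : ℤ_[p]) * z
        + (j ^ 3 - (α₁ : ℤ_[p]) * j ^ 2 - (α₂ : ℤ_[p]) * j) = 0 ∧
      (p : ℤ_[p]) ^ B ∣ z ∧ ¬ (p : ℤ_[p]) ^ (B + 1) ∣ z := by
  have hpj : (p : ℤ_[p]) ∣ j := p_dvd_of_pow hB hj
  set u : ℤ_[p] := j ^ 3 - (α₁ : ℤ_[p]) * j ^ 2 - (α₂ : ℤ_[p]) * j with hu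
  have hw : ¬ (p : ℤ_[p]) ∣ (j ^ 2 - (α₁ : ℤ_[p]) * j - (α₂ : ℤ_[p])) := by
    intro h
    apply hα₂
    have he : (α₂ : ℤ_[p])
        = j * (j - (α₁ : ℤ_[p])) - (j ^ 2 - (α₁ : ℤ_[p]) * j - (α₂ : ℤ_[p])) := by ring
    rw [he]
    exact dvd_sub (hpj.mul_right _) h
  have hwn : ‖j ^ 2 - (α₁ : ℤ_[p]) * j - (α₂ : ℤ_[p])‖ = 1 := norm_eq_one_of_not_dvd hw
  have hun : ‖u‖ = ‖j‖ := by
    have he : u = j * (j ^ 2 - (α₁ : ℤ_[p]) * j - (α₂ : ℤ_[p])) := by rw [hu]; ring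
    rw [he, norm_mul, hwn, mul_one]
  have hjle : ‖j‖ ≤ (p : ℝ) ^ (-(B : ℤ)) := (dvd_iff_norm j B).1 hj
  have hult : ‖u‖ < 1 := by
    rw [hun]
    refine lt_of_le_of_lt hjle ?_
    have h1 : (1 : ℝ) < (p : ℝ) := by exact_mod_cast hp.out.one_lt
    calc (p : ℝ) ^ (-(B : ℤ)) < (p : ℝ) ^ (0 : ℤ) := by
          apply zpow_lt_zpow_right₀ h1; omega
      _ = 1 := zpow_zero _
  set Fp : Polynomial ℤ_[p] :=
    Polynomial.X ^ 2 - Polynomial.C (α₃ : ℤ_[p]) * Polynomial.X + Polynomial.C u with hFp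
  have heval : Fp.eval 0 = u := by simp [hFp]
  have hderiv : Fp.derivative.eval 0 = -(α₃ : ℤ_[p]) := by simp [hFp]
  have hnorm : ‖Fp.eval 0‖ < ‖Fp.derivative.eval 0‖ ^ 2 := by
    rw [heval, hderiv, norm_neg, hα₃n, one_pow]
    exact hult
  obtain ⟨z, hz, hz1, -, -⟩ := hensels_lemma hnorm
  have hzeq : z ^ 2 - (α₃ : ℤ_[p]) * z + u = 0 := by
    have hz' := hz
    simp [hFp] at hz'
    linear_combination hz'
  have hzlt : ‖z‖ < 1 := by
    rw [Polynomial.coe_aeval_eq_eval, hderiv, norm_neg, hα₃n] at hz1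
    simpa using hz1
  have hfac : z * (z - (α₃ : ℤ_[p])) = -u := by linear_combination hzeq
  have hzn : ‖z‖ = ‖u‖ := by
    have h1 : ‖z - (α₃ : ℤ_[p])‖ = 1 := norm_sub_eq_one hzlt hα₃n
    have h2 := congrArg (fun t : ℤ_[p] => ‖t‖) hfac
    simpa [norm_mul, h1] using h2
  refine ⟨z, hzeq, ?_, ?_⟩
  · rw [dvd_iff_norm, hzn, hun]; exact hjle
  · intro h
    apply hj2
    rw [dvd_iff_norm] at h ⊢
    rw [hzn, hun] at h
    exact h

/-! ### The sets for parts (ii) and (iv) -/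

def T2 (p : ℕ) (B C : ℕ) : Finset (ℕ × ℕ) :=
  (Finset.range (p ^ (B + 1)) ×ˢ Finset.range (p ^ (C + 1))).filter
    (fun jk => (p ^ B ∣ jk.1 ∧ ¬ p ^ (B + 1) ∣ jk.1) ∧ (p ^ C ∣ jk.2 ∧ ¬ p ^ (C + 1) ∣ jk.2))

lemma set_ii (α₁ α₂ α₃ : ℤ) {B C F : ℕ} (hF : F ≤ min B C) :
    dSet p α₁ α₂ α₃ B C F 0 0
      = ⋃ jk ∈ T2 p B C, coset p (B + 1) (C + 1) (jk.1 : ℤ_[p]) (jk.2 : ℤ_[p]) := by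
  ext x
  simp only [dSet, Set.mem_setOf_eq, Set.mem_iUnion, coset, T2, Finset.mem_filter,
    Finset.mem_product, Finset.mem_range, exists_prop, Prod.exists]
  constructor
  · rintro ⟨hb, hc, -, -, -⟩
    refine ⟨x.1.appr (B + 1), x.2.appr (C + 1), ⟨⟨PadicInt.appr_lt _ _, PadicInt.appr_lt _ _⟩,
      ?_, ?_⟩, appr_dvd _ _, appr_dvd _ _⟩
    · have h := exact_transfer le_rfl (appr_dvd (B + 1) x.1) hb
      rw [nat_dvd_iff, nat_dvd_iff] at h
      exact h
    · have h := exact_transfer le_rfl (appr_dvd (C + 1) x.2) hc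
      rw [nat_dvd_iff, nat_dvd_iff] at h
      exact h
  · rintro ⟨j, k, ⟨⟨-, -⟩, hjd, hkd⟩, hxj, hxk⟩
    rw [← nat_dvd_iff, ← nat_dvd_iff] at hjd hkd
    have hb : (p : ℤ_[p]) ^ B ∣ x.1 ∧ ¬ (p : ℤ_[p]) ^ (B + 1) ∣ x.1 := by
      refine exact_transfer le_rfl ?_ hjd
      have he : (j : ℤ_[p]) - x.1 = -(x.1 - (j : ℤ_[p])) := by ring
      rw [he]
      exact (dvd_neg).2 hxj
    have hc : (p : ℤ_[p]) ^ C ∣ x.2 ∧ ¬ (p : ℤ_[p]) ^ (C + 1) ∣ x.2 := by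
      refine exact_transfer le_rfl ?_ hkd
      have he : (k : ℤ_[p]) - x.2 = -(x.2 - (k : ℤ_[p])) := by ring
      rw [he]
      exact (dvd_neg).2 hxk
    refine ⟨hb, hc, by simpa using one_dvd _, by simpa using one_dvd _, ?_⟩
    have key : x.1 ^ 3 - (α₁ : ℤ_[p]) * x.1 ^ 2 - (α₂ : ℤ_[p]) * x.1 + x.2 ^ 2
        - (α₃ : ℤ_[p]) * x.2
        = x.1 * (x.1 ^ 2 - (α₁ : ℤ_[p]) * x.1 - (α₂ : ℤ_[p]))
          + x.2 * (x.2 - (α₃ : ℤ_[p])) := by ring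
    rw [key]
    exact dvd_add ((dvd_of_le' (le_trans hF (min_le_left _ _)) hb.1).mul_right _)
      ((dvd_of_le' (le_trans hF (min_le_right _ _)) hc.1).mul_right _)

lemma card_T2 (B C : ℕ) : (T2 p B C).card = (p - 1) * (p - 1) := by
  classical
  have hprod : T2 p B C =
      ((Finset.range (p ^ (B + 1))).filter (fun j => p ^ B ∣ j ∧ ¬ p ^ (B + 1) ∣ j)) ×ˢ
      ((Finset.range (p ^ (C + 1))).filter (fun k => p ^ C ∣ k ∧ ¬ p ^ (C + 1) ∣ k)) := by
    ext ⟨a, b⟩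
    simp only [T2, Finset.mem_filter, Finset.mem_product, Finset.mem_range]
    tauto
  rw [hprod, Finset.card_product, card_exact_succ, card_exact_succ]

lemma int_Q_iff (α₁ α₂ α₃ : ℤ) (F j k : ℕ) :
    (p : ℤ_[p]) ^ F ∣ ((j : ℤ_[p]) ^ 3 - (α₁ : ℤ_[p]) * (j : ℤ_[p]) ^ 2
        - (α₂ : ℤ_[p]) * (j : ℤ_[p]) + (k : ℤ_[p]) ^ 2 - (α₃ : ℤ_[p]) * (k : ℤ_[p]))
      ↔ (p : ℤ) ^ F ∣ ((j : ℤ) ^ 3 - α₁ * (j : ℤ) ^ 2 - α₂ * (j : ℤ)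
        + (k : ℤ) ^ 2 - α₃ * (k : ℤ)) := by
  have hc : ((((j : ℤ) ^ 3 - α₁ * (j : ℤ) ^ 2 - α₂ * (j : ℤ) + (k : ℤ) ^ 2 - α₃ * (k : ℤ)) : ℤ)
      : ℤ_[p]) = ((j : ℤ_[p]) ^ 3 - (α₁ : ℤ_[p]) * (j : ℤ_[p]) ^ 2
        - (α₂ : ℤ_[p]) * (j : ℤ_[p]) + (k : ℤ_[p]) ^ 2 - (α₃ : ℤ_[p]) * (k : ℤ_[p])) := by
    push_cast; ring
  rw [← hc, PadicInt.pow_p_dvd_int_iff]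

def T4 (p : ℕ) (α₁ α₂ α₃ : ℤ) (B F : ℕ) : Finset (ℕ × ℕ) :=
  (Finset.range (p ^ F) ×ˢ Finset.range (p ^ F)).filter
    (fun jk => (p ^ B ∣ jk.1 ∧ ¬ p ^ (B + 1) ∣ jk.1) ∧ (p ^ B ∣ jk.2 ∧ ¬ p ^ (B + 1) ∣ jk.2) ∧
      (p : ℤ) ^ F ∣ ((jk.1 : ℤ) ^ 3 - α₁ * (jk.1 : ℤ) ^ 2 - α₂ * (jk.1 : ℤ)
        + (jk.2 : ℤ) ^ 2 - α₃ * (jk.2 : ℤ)))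

lemma set_iv (α₁ α₂ α₃ : ℤ) {B F : ℕ} (hBF : B < F) :
    dSet p α₁ α₂ α₃ B B F 0 0
      = ⋃ jk ∈ T4 p α₁ α₂ α₃ B F, coset p F F (jk.1 : ℤ_[p]) (jk.2 : ℤ_[p]) := by
  have hBF' : B + 1 ≤ F := hBF
  ext x
  simp only [dSet, Set.mem_setOf_eq, Set.mem_iUnion, coset, T4, Finset.mem_filter,
    Finset.mem_product, Finset.mem_range, exists_prop, Prod.exists]
  constructor
  · rintro ⟨hb, hc, -, -, hQ⟩
    refine ⟨x.1.appr F, x.2.appr F, ⟨⟨PadicInt.appr_lt _ _, PadicInt.appr_lt _ _⟩,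
      ?_, ?_, ?_⟩, appr_dvd _ _, appr_dvd _ _⟩
    · have h := exact_transfer hBF' (appr_dvd F x.1) hb
      rw [nat_dvd_iff, nat_dvd_iff] at h
      exact h
    · have h := exact_transfer hBF' (appr_dvd F x.2) hc
      rw [nat_dvd_iff, nat_dvd_iff] at h
      exact h
    · rw [← int_Q_iff]
      have hdiff := Q_congr α₁ α₂ α₃ F x.1 x.2 ((x.1.appr F : ℕ) : ℤ_[p])
        ((x.2.appr F : ℕ) : ℤ_[p]) (appr_dvd F x.1) (appr_dvd F x.2)
      have he : (((x.1.appr F : ℕ) : ℤ_[p]) ^ 3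
            - (α₁ : ℤ_[p]) * ((x.1.appr F : ℕ) : ℤ_[p]) ^ 2
            - (α₂ : ℤ_[p]) * ((x.1.appr F : ℕ) : ℤ_[p]) + ((x.2.appr F : ℕ) : ℤ_[p]) ^ 2
            - (α₃ : ℤ_[p]) * ((x.2.appr F : ℕ) : ℤ_[p]))
          = (x.1 ^ 3 - (α₁ : ℤ_[p]) * x.1 ^ 2 - (α₂ : ℤ_[p]) * x.1 + x.2 ^ 2
            - (α₃ : ℤ_[p]) * x.2)
          - ((x.1 ^ 3 - (α₁ : ℤ_[p]) * x.1 ^ 2 - (α₂ : ℤ_[p]) * x.1 + x.2 ^ 2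
            - (α₃ : ℤ_[p]) * x.2)
          - (((x.1.appr F : ℕ) : ℤ_[p]) ^ 3
            - (α₁ : ℤ_[p]) * ((x.1.appr F : ℕ) : ℤ_[p]) ^ 2
            - (α₂ : ℤ_[p]) * ((x.1.appr F : ℕ) : ℤ_[p]) + ((x.2.appr F : ℕ) : ℤ_[p]) ^ 2
            - (α₃ : ℤ_[p]) * ((x.2.appr F : ℕ) : ℤ_[p]))) := by ring
      rw [he]
      exact dvd_sub hQ hdiff
  · rintro ⟨j, k, ⟨⟨-, -⟩, hjd, hkd, hQ⟩, hxj, hxk⟩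
    rw [← nat_dvd_iff, ← nat_dvd_iff] at hjd hkd
    have hb : (p : ℤ_[p]) ^ B ∣ x.1 ∧ ¬ (p : ℤ_[p]) ^ (B + 1) ∣ x.1 := by
      refine exact_transfer hBF' ?_ hjd
      have he : (j : ℤ_[p]) - x.1 = -(x.1 - (j : ℤ_[p])) := by ring
      rw [he]; exact (dvd_neg).2 hxj
    have hc : (p : ℤ_[p]) ^ B ∣ x.2 ∧ ¬ (p : ℤ_[p]) ^ (B + 1) ∣ x.2 := by
      refine exact_transfer hBF' ?_ hkd
      have he : (k : ℤ_[p]) - x.2 = -(x.2 - (k : ℤ_[p])) := by ring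
      rw [he]; exact (dvd_neg).2 hxk
    refine ⟨hb, hc, by simpa using one_dvd _, by simpa using one_dvd _, ?_⟩
    rw [← int_Q_iff] at hQ
    have hdiff := Q_congr α₁ α₂ α₃ F x.1 x.2 ((j : ℕ) : ℤ_[p]) ((k : ℕ) : ℤ_[p]) hxj hxk
    have he : (x.1 ^ 3 - (α₁ : ℤ_[p]) * x.1 ^ 2 - (α₂ : ℤ_[p]) * x.1 + x.2 ^ 2
          - (α₃ : ℤ_[p]) * x.2)
        = ((x.1 ^ 3 - (α₁ : ℤ_[p]) * x.1 ^ 2 - (α₂ : ℤ_[p]) * x.1 + x.2 ^ 2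
          - (α₃ : ℤ_[p]) * x.2)
          - (((j : ℕ) : ℤ_[p]) ^ 3 - (α₁ : ℤ_[p]) * ((j : ℕ) : ℤ_[p]) ^ 2
            - (α₂ : ℤ_[p]) * ((j : ℕ) : ℤ_[p]) + ((k : ℕ) : ℤ_[p]) ^ 2
            - (α₃ : ℤ_[p]) * ((k : ℕ) : ℤ_[p])))
          + (((j : ℕ) : ℤ_[p]) ^ 3 - (α₁ : ℤ_[p]) * ((j : ℕ) : ℤ_[p]) ^ 2
            - (α₂ : ℤ_[p]) * ((j : ℕ) : ℤ_[p]) + ((k : ℕ) : ℤ_[p]) ^ 2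
            - (α₃ : ℤ_[p]) * ((k : ℕ) : ℤ_[p])) := by ring
    rw [he]
    exact dvd_add hdiff hQ

lemma p_dvd_cast {b : ℕ} (h : p ∣ b) : (p : ℤ_[p]) ∣ (b : ℤ_[p]) := by
  have h1 : p ^ 1 ∣ b := by simpa [pow_one] using h
  have := (nat_dvd_iff 1 b).2 h1
  simpa [pow_one] using this

lemma card_T4 (α₁ α₂ α₃ : ℤ) (hα₂ : ¬ (p : ℤ_[p]) ∣ (α₂ : ℤ_[p]))
    (hα₃n : ‖(α₃ : ℤ_[p])‖ = 1) {B F : ℕ} (hB : 1 ≤ B) (hBF : B < F) :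
    (T4 p α₁ α₂ α₃ B F).card = p ^ (F - B) - p ^ (F - B - 1) := by
  classical
  have hBF' : B + 1 ≤ F := hBF
  set J := (Finset.range (p ^ F)).filter (fun j => p ^ B ∣ j ∧ ¬ p ^ (B + 1) ∣ j) with hJ
  have hmap : ∀ x ∈ T4 p α₁ α₂ α₃ B F, x.1 ∈ J := by
    intro x hx
    simp only [T4, Finset.mem_filter, Finset.mem_product, Finset.mem_range] at hx
    simp only [hJ, Finset.mem_filter, Finset.mem_range]
    exact ⟨hx.1.1, hx.2.1⟩
  rw [Finset.card_eq_sum_card_fiberwise hmap]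
  have hfiber : ∀ j ∈ J, ((T4 p α₁ α₂ α₃ B F).filter (fun x => x.1 = j)).card = 1 := by
    intro j hj
    simp only [hJ, Finset.mem_filter, Finset.mem_range] at hj
    obtain ⟨hjlt, hjd, hjd2⟩ := hj
    have hjz : (p : ℤ_[p]) ^ B ∣ (j : ℤ_[p]) := (nat_dvd_iff _ _).2 hjd
    have hjz2 : ¬ (p : ℤ_[p]) ^ (B + 1) ∣ (j : ℤ_[p]) := fun h => hjd2 ((nat_dvd_iff _ _).1 h)
    obtain ⟨z, hzeq, hzB, hzB1⟩ := exists_root α₁ α₂ α₃ hα₂ hα₃n hB hjz hjz2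
    set k := z.appr F with hk
    have hkz : (p : ℤ_[p]) ^ F ∣ z - (k : ℤ_[p]) := appr_dvd F z
    have hkcond : (p : ℤ_[p]) ^ B ∣ (k : ℤ_[p]) ∧ ¬ (p : ℤ_[p]) ^ (B + 1) ∣ (k : ℤ_[p]) :=
      exact_transfer hBF' hkz ⟨hzB, hzB1⟩
    have hQjz : ((j : ℤ_[p]) ^ 3 - (α₁ : ℤ_[p]) * (j : ℤ_[p]) ^ 2 - (α₂ : ℤ_[p]) * (j : ℤ_[p])
        + z ^ 2 - (α₃ : ℤ_[p]) * z) = 0 := by linear_combination hzeq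
    have hQjk : (p : ℤ_[p]) ^ F ∣ ((j : ℤ_[p]) ^ 3 - (α₁ : ℤ_[p]) * (j : ℤ_[p]) ^ 2
        - (α₂ : ℤ_[p]) * (j : ℤ_[p]) + (k : ℤ_[p]) ^ 2 - (α₃ : ℤ_[p]) * (k : ℤ_[p])) := by
      have hdiff := Q_congr α₁ α₂ α₃ F (j : ℤ_[p]) (k : ℤ_[p]) (j : ℤ_[p]) z
        (by simp) (by
          have he : (k : ℤ_[p]) - z = -(z - (k : ℤ_[p])) := by ring
          rw [he]; exact (dvd_neg).2 hkz)
      rw [hQjz, sub_zero] at hdiff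
      exact hdiff
    rw [Finset.card_eq_one]
    refine ⟨(j, k), ?_⟩
    ext ⟨a, b⟩
    simp only [Finset.mem_filter, Finset.mem_singleton, T4, Finset.mem_product,
      Finset.mem_range, Prod.mk.injEq]
    constructor
    · rintro ⟨⟨⟨halt, hblt⟩, hA, hBc, hQab⟩, rfl⟩
      refine ⟨rfl, ?_⟩
      have hQb : (p : ℤ_[p]) ^ F ∣ ((a : ℤ_[p]) ^ 3 - (α₁ : ℤ_[p]) * (a : ℤ_[p]) ^ 2
          - (α₂ : ℤ_[p]) * (a : ℤ_[p]) + (b : ℤ_[p]) ^ 2 - (α₃ : ℤ_[p]) * (b : ℤ_[p])) :=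
        (int_Q_iff α₁ α₂ α₃ F a b).2 hQab
      have hdiff : (p : ℤ_[p]) ^ F ∣ ((b : ℤ_[p]) - (k : ℤ_[p])) *
          ((b : ℤ_[p]) + (k : ℤ_[p]) - (α₃ : ℤ_[p])) := by
        have he : ((b : ℤ_[p]) - (k : ℤ_[p])) * ((b : ℤ_[p]) + (k : ℤ_[p]) - (α₃ : ℤ_[p]))
            = ((a : ℤ_[p]) ^ 3 - (α₁ : ℤ_[p]) * (a : ℤ_[p]) ^ 2 - (α₂ : ℤ_[p]) * (a : ℤ_[p])
              + (b : ℤ_[p]) ^ 2 - (α₃ : ℤ_[p]) * (b : ℤ_[p]))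
            - ((a : ℤ_[p]) ^ 3 - (α₁ : ℤ_[p]) * (a : ℤ_[p]) ^ 2 - (α₂ : ℤ_[p]) * (a : ℤ_[p])
              + (k : ℤ_[p]) ^ 2 - (α₃ : ℤ_[p]) * (k : ℤ_[p])) := by ring
        rw [he]
        exact dvd_sub hQb hQjk
      have hbd : ‖(b : ℤ_[p])‖ < 1 := (PadicInt.norm_lt_one_iff_dvd _).2
        (p_dvd_cast (dvd_trans (dvd_pow_self p (by omega : B ≠ 0)) hBc.1))
      have hkd : ‖(k : ℤ_[p])‖ < 1 := (PadicInt.norm_lt_one_iff_dvd _).2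
        (p_dvd_of_pow hB hkcond.1)
      have hsum : ‖(b : ℤ_[p]) + (k : ℤ_[p])‖ < 1 :=
        lt_of_le_of_lt (PadicInt.nonarchimedean _ _) (max_lt hbd hkd)
      have hunit : ‖(b : ℤ_[p]) + (k : ℤ_[p]) - (α₃ : ℤ_[p])‖ = 1 :=
        norm_sub_eq_one hsum hα₃n
      have hbk : (p : ℤ_[p]) ^ F ∣ ((b : ℤ_[p]) - (k : ℤ_[p])) := by
        rw [dvd_iff_norm] at hdiff ⊢
        rwa [norm_mul, hunit, mul_one] at hdiff
      exact eq_of_dvd_sub hblt (PadicInt.appr_lt _ _) hbk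
    · rintro ⟨rfl, rfl⟩
      refine ⟨⟨⟨hjlt, PadicInt.appr_lt _ _⟩, ⟨hjd, hjd2⟩, ?_, ?_⟩, rfl⟩
      · rw [← nat_dvd_iff, ← nat_dvd_iff]
        exact hkcond
      · exact (int_Q_iff α₁ α₂ α₃ F _ _).1 hQjk
  rw [Finset.sum_congr rfl hfiber, Finset.sum_const, smul_eq_mul, mul_one, hJ,
    card_filter_exact B F hBF]

/-! ### Emptiness for parts (i) and (iii) -/

lemma empty_i (α₁ α₂ α₃ : ℤ) (hα₂p : ¬ (p : ℤ_[p]) ∣ (α₂ : ℤ_[p]))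
    (hα₃p : ¬ (p : ℤ_[p]) ∣ (α₃ : ℤ_[p])) {B C F G H : ℕ} (hB : 1 ≤ B) (hC : 1 ≤ C)
    (hGH : 1 ≤ G ∨ 1 ≤ H) : dSet p α₁ α₂ α₃ B C F G H = ∅ := by
  ext x
  simp only [dSet, Set.mem_setOf_eq, Set.mem_empty_iff_false, iff_false]
  rintro ⟨⟨hb, -⟩, ⟨hc, -⟩, hG, hH, -⟩
  have hpb : (p : ℤ_[p]) ∣ x.1 := p_dvd_of_pow hB hb
  have hpc : (p : ℤ_[p]) ∣ x.2 := p_dvd_of_pow hC hc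
  rcases hGH with hG1 | hH1
  · apply hα₃p
    have h3 : (p : ℤ_[p]) ∣ ((α₃ : ℤ_[p]) - x.2) := p_dvd_of_pow hG1 hG
    have he : (α₃ : ℤ_[p]) = ((α₃ : ℤ_[p]) - x.2) + x.2 := by ring
    rw [he]
    exact dvd_add h3 hpc
  · apply hα₂p
    have h2 : (p : ℤ_[p]) ∣ ((α₁ : ℤ_[p]) * x.1 + (α₂ : ℤ_[p])) := p_dvd_of_pow hH1 hH
    have he : (α₂ : ℤ_[p]) = ((α₁ : ℤ_[p]) * x.1 + (α₂ : ℤ_[p])) - (α₁ : ℤ_[p]) * x.1 := by ring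
    rw [he]
    exact dvd_sub h2 (hpb.mul_left _)

lemma empty_iii (α₁ α₂ α₃ : ℤ) (hα₂p : ¬ (p : ℤ_[p]) ∣ (α₂ : ℤ_[p]))
    (hα₃n : ‖(α₃ : ℤ_[p])‖ = 1) {B C F : ℕ} (hB : 1 ≤ B) (hC : 1 ≤ C)
    (hF : min B C < F) (hBC : B ≠ C) : dSet p α₁ α₂ α₃ B C F 0 0 = ∅ := by
  ext x
  simp only [dSet, Set.mem_setOf_eq, Set.mem_empty_iff_false, iff_false]
  rintro ⟨⟨hb, hb2⟩, ⟨hc, hc2⟩, -, -, hQ⟩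
  rcases Nat.lt_or_ge B C with hlt | hge
  · -- B < C, so `p^(B+1)` divides everything except `α₂ x₁`
    have hBF : B + 1 ≤ F := by omega
    have hBC' : B + 1 ≤ C := hlt
    apply hb2
    have hbb : (p : ℤ_[p]) ^ (B + 1) ∣ x.1 * x.1 := by
      rw [pow_succ]
      exact mul_dvd_mul hb (p_dvd_of_pow hB hb)
    have hkey : (p : ℤ_[p]) ^ (B + 1) ∣ (α₂ : ℤ_[p]) * x.1 := by
      have he : (α₂ : ℤ_[p]) * x.1
          = (x.1 * x.1) * x.1 - (α₁ : ℤ_[p]) * (x.1 * x.1) + x.2 * x.2 - (α₃ : ℤ_[p]) * x.2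
            - (x.1 ^ 3 - (α₁ : ℤ_[p]) * x.1 ^ 2 - (α₂ : ℤ_[p]) * x.1 + x.2 ^ 2
              - (α₃ : ℤ_[p]) * x.2) := by ring
      rw [he]
      have hc1 : (p : ℤ_[p]) ^ (B + 1) ∣ x.2 := dvd_of_le' hBC' hc
      exact dvd_sub (dvd_sub (dvd_add (dvd_sub (hbb.mul_right _) (hbb.mul_left _))
        (hc1.mul_right _)) (hc1.mul_left _)) (dvd_of_le' hBF hQ)
    rw [dvd_iff_norm] at hkey ⊢
    rwa [norm_mul, norm_eq_one_of_not_dvd hα₂p, one_mul] at hkey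
  · have hlt : C < B := by omega
    have hCF : C + 1 ≤ F := by omega
    have hCB : C + 1 ≤ B := hlt
    apply hc2
    have hkey : (p : ℤ_[p]) ^ (C + 1) ∣ x.2 * (x.2 - (α₃ : ℤ_[p])) := by
      have he : x.2 * (x.2 - (α₃ : ℤ_[p]))
          = (x.1 ^ 3 - (α₁ : ℤ_[p]) * x.1 ^ 2 - (α₂ : ℤ_[p]) * x.1 + x.2 ^ 2
              - (α₃ : ℤ_[p]) * x.2)
            - (x.1 * (x.1 ^ 2 - (α₁ : ℤ_[p]) * x.1 - (α₂ : ℤ_[p]))) := by ring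
      rw [he]
      have hb1 : (p : ℤ_[p]) ^ (C + 1) ∣ x.1 := dvd_of_le' hCB hb
      exact dvd_sub (dvd_of_le' hCF hQ) (hb1.mul_right _)
    have hx2 : ‖x.2‖ < 1 := (PadicInt.norm_lt_one_iff_dvd _).2 (p_dvd_of_pow hC hc)
    have hunit : ‖x.2 - (α₃ : ℤ_[p])‖ = 1 := norm_sub_eq_one hx2 hα₃n
    rw [dvd_iff_norm] at hkey ⊢
    rwa [norm_mul, hunit, mul_one] at hkey


end Stmt7

/-- Let `p` be a prime with `p ∤ α₁α₂α₃` and let `d(B,C,F,G,H)` be the Haar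
measure (normalized so that `μ(ℤ_p²) = 1`) of the set `dSet`. Suppose `B ≥ 1` and `C ≥ 1`.
Then: (i) if `G ≥ 1` or `H ≥ 1` then `d(B,C,F,G,H) = 0`; (ii) if `F ≤ min{B,C}` then
`d(B,C,F,0,0) = p^{−B−C}(1 − p^{−1})²`; (iii) if `F > min{B,C}` and `B ≠ C` then
`d(B,C,F,0,0) = 0`; (iv) if `B = C` and `F > B` then `d(B,B,F,0,0) = p^{−F−B}(1 − p^{−1})`. -/
theorem stmt_7 (p : ℕ) [Fact p.Prime] (α₁ α₂ α₃ : ℤ) (hpα : ¬ (p : ℤ) ∣ α₁ * α₂ * α₃)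
    [MeasurableSpace ℤ_[p]] [BorelSpace ℤ_[p]]
    (μ : Measure (ℤ_[p] × ℤ_[p])) [μ.IsAddHaarMeasure] (hμ : μ Set.univ = 1)
    (B C F G H : ℕ) (hB : 1 ≤ B) (hC : 1 ≤ C) :
    (1 ≤ G ∨ 1 ≤ H → μ (dSet p α₁ α₂ α₃ B C F G H) = 0) ∧
    (F ≤ min B C →
      μ (dSet p α₁ α₂ α₃ B C F 0 0)
        = (p : ℝ≥0∞) ^ (-(B : ℤ) - (C : ℤ)) * (1 - (p : ℝ≥0∞)⁻¹) ^ 2) ∧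
    (min B C < F → B ≠ C → μ (dSet p α₁ α₂ α₃ B C F 0 0) = 0) ∧
    (B = C → B < F →
      μ (dSet p α₁ α₂ α₃ B B F 0 0)
        = (p : ℝ≥0∞) ^ (-(F : ℤ) - (B : ℤ)) * (1 - (p : ℝ≥0∞)⁻¹)) := by
  classical
  have hα₂ : ¬ (p : ℤ) ∣ α₂ := fun h => hpα ((h.mul_left α₁).mul_right α₃)
  have hα₃ : ¬ (p : ℤ) ∣ α₃ := fun h => hpα (h.mul_left (α₁ * α₂))
  have hα₂p : ¬ (p : ℤ_[p]) ∣ (α₂ : ℤ_[p]) := by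
    intro h
    apply hα₂
    have h1 : (p : ℤ_[p]) ^ 1 ∣ ((α₂ : ℤ) : ℤ_[p]) := by simpa [pow_one] using h
    have h2 := (PadicInt.pow_p_dvd_int_iff 1 α₂).1 h1
    simpa [pow_one] using h2
  have hα₃p : ¬ (p : ℤ_[p]) ∣ (α₃ : ℤ_[p]) := by
    intro h
    apply hα₃
    have h1 : (p : ℤ_[p]) ^ 1 ∣ ((α₃ : ℤ) : ℤ_[p]) := by simpa [pow_one] using h
    have h2 := (PadicInt.pow_p_dvd_int_iff 1 α₃).1 h1
    simpa [pow_one] using h2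
  have hα₃n : ‖(α₃ : ℤ_[p])‖ = 1 := Stmt7.norm_eq_one_of_not_dvd hα₃p
  refine ⟨?_, ?_, ?_, ?_⟩
  · intro hGH
    rw [Stmt7.empty_i α₁ α₂ α₃ hα₂p hα₃p hB hC hGH, measure_empty]
  · intro hF
    have hbound : ∀ jk ∈ Stmt7.T2 p B C, jk.1 < p ^ (B + 1) ∧ jk.2 < p ^ (C + 1) := by
      intro jk hjk
      simp only [Stmt7.T2, Finset.mem_filter, Finset.mem_product, Finset.mem_range] at hjk
      exact hjk.1
    rw [Stmt7.set_ii α₁ α₂ α₃ hF,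
      Stmt7.measure_biUnion_cosets μ hμ (B + 1) (C + 1) (Stmt7.T2 p B C) hbound,
      Stmt7.card_T2]
    exact Stmt7.enn2 B C
  · intro hF hBC
    rw [Stmt7.empty_iii α₁ α₂ α₃ hα₂p hα₃n hB hC hF hBC, measure_empty]
  · intro _ hBF
    have hbound : ∀ jk ∈ Stmt7.T4 p α₁ α₂ α₃ B F, jk.1 < p ^ F ∧ jk.2 < p ^ F := by
      intro jk hjk
      simp only [Stmt7.T4, Finset.mem_filter, Finset.mem_product, Finset.mem_range] at hjk
      exact hjk.1
    rw [Stmt7.set_iv α₁ α₂ α₃ hBF,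
      Stmt7.measure_biUnion_cosets μ hμ F F (Stmt7.T4 p α₁ α₂ α₃ B F) hbound,
      Stmt7.card_T4 α₁ α₂ α₃ hα₂p hα₃n hB hBF]
    exact Stmt7.enn4 B F hBF
end

section
/- Let p be a prime with p ∤ α₁α₂α₃, and for B, C ≥ 1 and F, H ∈ ℕ let e(B,C,F,H) = μ{(b,c) ∈ ℤ_p² : v(b) = B, v(c) = C, v(α₁b + α₂c) ≥ H, v(b³ − α₁b²c − α₂bc² + c − α₃c²) ≥ F}. Then: (1) if F ≤ min{3B, C} and H ≤ min{B, C}, then e(B,C,F,H) = p^{−B−C}(1 − p^{−1})²; (2) if F > min{3B, C} and 3B ≠ C, or if H > min{B, C} and B ≠ C, then e(B,C,F,H) = 0; (3) if F > min{3B, C}, 3B = C and H ≤ min{B, C}, then e(B,3B,F,H) = p^{−F−B}(1 − p^{−1}); (4) if H > min{B, C}, B = C and F ≤ min{3B, C}, then e(B,B,F,H) = p^{−H−B}(1 − p^{−1}). -/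
open MeasureTheory
open scoped ENNReal

namespace Stmt9Aux
variable {p : ℕ} [hp : Fact p.Prime]

lemma dvd_iff_norm_le {n : ℕ} {x : ℤ_[p]} :
    (p : ℤ_[p]) ^ n ∣ x ↔ ‖x‖ ≤ (p : ℝ) ^ (-(n : ℤ)) := by
  rw [PadicInt.norm_le_pow_iff_mem_span_pow, Ideal.mem_span_singleton]

lemma dvd_natCast_iff {n : ℕ} {m : ℕ} :
    (p : ℤ_[p]) ^ n ∣ (m : ℤ_[p]) ↔ p ^ n ∣ m := by
  have := PadicInt.pow_p_dvd_int_iff (p := p) n (m : ℤ)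
  rw [Int.cast_natCast] at this
  rw [this, Int.natCast_dvd_natCast (n := m) (m := p ^ n) |>.symm]
  norm_cast

/-- The coset of `(p^n₁ ℤ_p) × (p^n₂ ℤ_p)` centered at `a`. -/
def coset (p : ℕ) [Fact p.Prime] (n₁ n₂ : ℕ) (a : ℤ_[p] × ℤ_[p]) : Set (ℤ_[p] × ℤ_[p]) :=
  {x | (p : ℤ_[p]) ^ n₁ ∣ x.1 - a.1 ∧ (p : ℤ_[p]) ^ n₂ ∣ x.2 - a.2}

variable [MeasurableSpace ℤ_[p]] [BorelSpace ℤ_[p]]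

lemma isClosed_dvd (n : ℕ) : IsClosed {x : ℤ_[p] | (p : ℤ_[p]) ^ n ∣ x} := by
  have : {x : ℤ_[p] | (p : ℤ_[p]) ^ n ∣ x} = Metric.closedBall 0 ((p : ℝ) ^ (-(n : ℤ))) := by
    ext x
    simp [dvd_iff_norm_le, Metric.mem_closedBall, dist_zero_right]
  rw [this]
  exact Metric.isClosed_closedBall

lemma measurableSet_coset (n₁ n₂ : ℕ) (a : ℤ_[p] × ℤ_[p]) :
    MeasurableSet (coset p n₁ n₂ a) := by
  have h1 : coset p n₁ n₂ a =
      (fun x : ℤ_[p] × ℤ_[p] => x - a) ⁻¹'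
        ({x : ℤ_[p] | (p : ℤ_[p]) ^ n₁ ∣ x} ×ˢ {x : ℤ_[p] | (p : ℤ_[p]) ^ n₂ ∣ x}) := by
    ext x; simp [coset, Set.mem_prod]
  rw [h1]
  exact ((isClosed_dvd n₁).measurableSet.prod (isClosed_dvd n₂).measurableSet).preimage
    (measurable_id.sub measurable_const)

end Stmt9Aux

namespace Stmt9Aux
variable {p : ℕ} [hp : Fact p.Prime]

lemma dvd_sub_of_dvd_dvd {n : ℕ} {x y z : ℤ_[p]} (h1 : (p : ℤ_[p]) ^ n ∣ x - y)
    (h2 : (p : ℤ_[p]) ^ n ∣ x - z) : (p : ℤ_[p]) ^ n ∣ z - y := by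
  have := dvd_sub h1 h2
  simpa using this

lemma not_dvd_natCast_sub {n : ℕ} {i j : ℕ} (hi : i < p ^ n) (hj : j < p ^ n) (hij : i ≠ j) :
    ¬ (p : ℤ_[p]) ^ n ∣ ((i : ℤ_[p]) - (j : ℤ_[p])) := by
  intro h
  have h' : (p : ℤ_[p]) ^ n ∣ (((i : ℤ) - (j : ℤ) : ℤ) : ℤ_[p]) := by push_cast; exact h
  rw [PadicInt.pow_p_dvd_int_iff] at h'
  have := Int.eq_zero_of_dvd_of_natAbs_lt_natAbs h' ?_
  · omega
  · simp only [Int.natAbs_pow, Int.natAbs_natCast]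
    omega

lemma coset_disjoint {n₁ n₂ : ℕ} {a a' : ℤ_[p] × ℤ_[p]}
    (h : ¬ (p : ℤ_[p]) ^ n₁ ∣ a.1 - a'.1 ∨ ¬ (p : ℤ_[p]) ^ n₂ ∣ a.2 - a'.2) :
    Disjoint (coset p n₁ n₂ a) (coset p n₁ n₂ a') := by
  rw [Set.disjoint_left]
  rintro x ⟨hx1, hx2⟩ ⟨hy1, hy2⟩
  rcases h with h | h
  · exact h (dvd_sub_of_dvd_dvd hy1 hx1)
  · exact h (dvd_sub_of_dvd_dvd hy2 hx2)

lemma mem_coset_appr (n₁ n₂ : ℕ) (x : ℤ_[p] × ℤ_[p]) :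
    x ∈ coset p n₁ n₂ ((x.1.appr n₁ : ℤ_[p]), (x.2.appr n₂ : ℤ_[p])) := by
  constructor
  · have := x.1.appr_spec n₁
    rwa [Ideal.mem_span_singleton] at this
  · have := x.2.appr_spec n₂
    rwa [Ideal.mem_span_singleton] at this

variable [MeasurableSpace ℤ_[p]] [BorelSpace ℤ_[p]]
variable (μ : Measure (ℤ_[p] × ℤ_[p])) [μ.IsAddHaarMeasure]

lemma measure_coset_eq_zero_coset (n₁ n₂ : ℕ) (a : ℤ_[p] × ℤ_[p]) :
    μ (coset p n₁ n₂ a) = μ (coset p n₁ n₂ 0) := by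
  have h1 : coset p n₁ n₂ a = (fun x : ℤ_[p] × ℤ_[p] => -a + x) ⁻¹' (coset p n₁ n₂ 0) := by
    ext x
    simp only [coset, Set.mem_preimage, Set.mem_setOf_eq, Prod.fst_add, Prod.snd_add,
      Prod.fst_neg, Prod.snd_neg, Prod.fst_zero, Prod.snd_zero, sub_zero, neg_add_eq_sub, Prod.fst_sub, Prod.snd_sub]
  rw [h1]
  exact measure_preimage_add μ (-a) _

lemma measure_coset (hμ : μ Set.univ = 1) (n₁ n₂ : ℕ) (a : ℤ_[p] × ℤ_[p]) :
    μ (coset p n₁ n₂ a) = ((p : ℝ≥0∞) ^ (n₁ + n₂))⁻¹ := by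
  classical
  set T : Finset (ℕ × ℕ) := Finset.range (p ^ n₁) ×ˢ Finset.range (p ^ n₂) with hT
  have hcover : (Set.univ : Set (ℤ_[p] × ℤ_[p])) =
      ⋃ m ∈ T, coset p n₁ n₂ ((m.1 : ℤ_[p]), (m.2 : ℤ_[p])) := by
    ext x
    simp only [Set.mem_univ, true_iff, Set.mem_iUnion]
    refine ⟨(x.1.appr n₁, x.2.appr n₂), ?_, mem_coset_appr n₁ n₂ x⟩
    simp [hT, Finset.mem_product, x.1.appr_lt, x.2.appr_lt]
  have hdisj : (T : Set (ℕ × ℕ)).PairwiseDisjoint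
      (fun m : ℕ × ℕ => coset p n₁ n₂ ((m.1 : ℤ_[p]), (m.2 : ℤ_[p]))) := by
    intro m hm m' hm' hmm'
    simp only [hT, Finset.coe_product, Finset.coe_range, Set.mem_prod, Set.mem_Iio] at hm hm'
    apply coset_disjoint
    by_cases h1 : m.1 = m'.1
    · exact Or.inr (not_dvd_natCast_sub hm.2 hm'.2 fun h2 => hmm' (Prod.ext h1 h2))
    · exact Or.inl (not_dvd_natCast_sub hm.1 hm'.1 h1)
  have hsum : μ Set.univ = ∑ m ∈ T, μ (coset p n₁ n₂ ((m.1 : ℤ_[p]), (m.2 : ℤ_[p]))) := by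
    rw [hcover]
    exact measure_biUnion_finset hdisj fun m _ => measurableSet_coset n₁ n₂ _
  rw [hμ] at hsum
  have hconst : ∀ m ∈ T, μ (coset p n₁ n₂ ((m.1 : ℤ_[p]), (m.2 : ℤ_[p])))
      = μ (coset p n₁ n₂ 0) := fun m _ => measure_coset_eq_zero_coset μ n₁ n₂ _
  rw [Finset.sum_congr rfl hconst, Finset.sum_const, hT, Finset.card_product,
    Finset.card_range, Finset.card_range] at hsum
  have hcard : (p ^ n₁ * p ^ n₂ : ℕ) = p ^ (n₁ + n₂) := by ring
  rw [hcard, nsmul_eq_mul] at hsum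
  have hN : ((p ^ (n₁ + n₂) : ℕ) : ℝ≥0∞) = (p : ℝ≥0∞) ^ (n₁ + n₂) := by push_cast; ring
  rw [hN] at hsum
  have hp0 : (p : ℝ≥0∞) ^ (n₁ + n₂) ≠ 0 :=
    pow_ne_zero _ (Nat.cast_ne_zero.mpr hp.1.pos.ne')
  have hptop : (p : ℝ≥0∞) ^ (n₁ + n₂) ≠ ⊤ := by
    exact ENNReal.pow_ne_top (ENNReal.natCast_ne_top p)
  rw [measure_coset_eq_zero_coset μ n₁ n₂ a]
  calc μ (coset p n₁ n₂ 0)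
      = ((p : ℝ≥0∞) ^ (n₁ + n₂))⁻¹ * ((p : ℝ≥0∞) ^ (n₁ + n₂) * μ (coset p n₁ n₂ 0)) := by
        rw [← mul_assoc, ENNReal.inv_mul_cancel hp0 hptop, one_mul]
    _ = ((p : ℝ≥0∞) ^ (n₁ + n₂))⁻¹ := by rw [← hsum, mul_one]

lemma measure_biUnion_cosets (hμ : μ Set.univ = 1) {ι : Type*} [DecidableEq ι] (s : Finset ι)
    (f : ι → ℤ_[p] × ℤ_[p]) (n₁ n₂ : ℕ)
    (hdisj : ∀ i ∈ s, ∀ j ∈ s, i ≠ j →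
      Disjoint (coset p n₁ n₂ (f i)) (coset p n₁ n₂ (f j))) :
    μ (⋃ i ∈ s, coset p n₁ n₂ (f i)) = s.card * ((p : ℝ≥0∞) ^ (n₁ + n₂))⁻¹ := by
  rw [measure_biUnion_finset (fun i hi j hj hij => hdisj i hi j hj hij)
    (fun i _ => measurableSet_coset n₁ n₂ _)]
  rw [Finset.sum_congr rfl (fun i _ => measure_coset μ hμ n₁ n₂ (f i)), Finset.sum_const,
    nsmul_eq_mul]

end Stmt9Aux

namespace Stmt9Aux
variable {p : ℕ} [hp : Fact p.Prime]

/-- The polynomial from the statement. -/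
noncomputable def Q (α₁ α₂ α₃ : ℤ) (b c : ℤ_[p]) : ℤ_[p] :=
  b ^ 3 - (α₁ : ℤ_[p]) * b ^ 2 * c - (α₂ : ℤ_[p]) * b * c ^ 2 + c - (α₃ : ℤ_[p]) * c ^ 2

lemma Q_sub_Q_c (α₁ α₂ α₃ : ℤ) (b x y : ℤ_[p]) :
    Q α₁ α₂ α₃ b x - Q α₁ α₂ α₃ b y
      = (x - y) * (1 - ((α₁ : ℤ_[p]) * b ^ 2 + (α₂ : ℤ_[p]) * b * (x + y)
          + (α₃ : ℤ_[p]) * (x + y))) := by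
  simp only [Q]; ring

lemma Q_sub_Q_b (α₁ α₂ α₃ : ℤ) (b b' c : ℤ_[p]) :
    Q α₁ α₂ α₃ b c - Q α₁ α₂ α₃ b' c
      = (b - b') * (b ^ 2 + b * b' + b' ^ 2 - (α₁ : ℤ_[p]) * (b + b') * c
          - (α₂ : ℤ_[p]) * c ^ 2) := by
  simp only [Q]; ring

lemma Q_eq (α₁ α₂ α₃ : ℤ) (b x : ℤ_[p]) :
    Q α₁ α₂ α₃ b x = b ^ 3 + x * (1 - ((α₁ : ℤ_[p]) * b ^ 2 + (α₂ : ℤ_[p]) * b * x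
      + (α₃ : ℤ_[p]) * x)) := by
  simp only [Q]; ring

lemma isUnit_one_sub {t : ℤ_[p]} (ht : (p : ℤ_[p]) ∣ t) : IsUnit (1 - t) := by
  by_contra h
  rw [PadicInt.not_isUnit_iff, PadicInt.norm_lt_one_iff_dvd] at h
  have h1 : (p : ℤ_[p]) ∣ 1 := by
    have := dvd_add h ht
    simpa using this
  have h2 : ‖(p : ℤ_[p])‖ = 1 := PadicInt.isUnit_iff.mp (isUnit_of_dvd_one h1)
  rw [PadicInt.norm_p, inv_eq_one] at h2
  exact hp.1.one_lt.ne' (by exact_mod_cast h2)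

end Stmt9Aux

namespace Stmt9Aux
variable {p : ℕ} [hp : Fact p.Prime]

lemma isUnit_intCast_of_not_dvd {α : ℤ} (hα : ¬ (p : ℤ) ∣ α) : IsUnit (α : ℤ_[p]) := by
  rw [PadicInt.isUnit_iff]
  refine le_antisymm (PadicInt.norm_le_one _) (not_lt.mp ?_)
  rw [PadicInt.norm_int_lt_one_iff_dvd]
  exact hα

lemma p_ne_zero' : ((p : ℤ_[p]) : ℤ_[p]) ≠ 0 :=
  Nat.cast_ne_zero.mpr hp.1.ne_zero

/-- If `v(b) = B` exactly, then `p^(3B+1) ∤ b³`. -/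
lemma not_dvd_cube {B : ℕ} {b : ℤ_[p]} (hb : (p : ℤ_[p]) ^ B ∣ b)
    (hb' : ¬ (p : ℤ_[p]) ^ (B + 1) ∣ b) : ¬ (p : ℤ_[p]) ^ (3 * B + 1) ∣ b ^ 3 := by
  obtain ⟨u, rfl⟩ := hb
  have hu : ¬ (p : ℤ_[p]) ∣ u := by
    intro h
    exact hb' (by rw [pow_succ]; exact mul_dvd_mul_left _ h)
  intro h
  have h1 : (p : ℤ_[p]) ^ (3 * B) * (p : ℤ_[p]) ∣ (p : ℤ_[p]) ^ (3 * B) * u ^ 3 := by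
    calc (p : ℤ_[p]) ^ (3 * B) * (p : ℤ_[p]) = (p : ℤ_[p]) ^ (3 * B + 1) := by rw [pow_succ]
    _ ∣ ((p : ℤ_[p]) ^ B * u) ^ 3 := h
    _ = (p : ℤ_[p]) ^ (3 * B) * u ^ 3 := by rw [mul_pow, ← pow_mul, mul_comm B 3]
  have h2 : (p : ℤ_[p]) ∣ u ^ 3 :=
    (mul_dvd_mul_iff_left (pow_ne_zero (3 * B) p_ne_zero')).mp h1
  have hprime : Prime (p : ℤ_[p]) := PadicInt.prime_p
  rcases hprime.dvd_of_dvd_pow h2 with h3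
  exact hu h3

lemma not_dvd_unit_mul {k : ℕ} {u b : ℤ_[p]} (hu : IsUnit u)
    (hb : ¬ (p : ℤ_[p]) ^ k ∣ b) : ¬ (p : ℤ_[p]) ^ k ∣ u * b := by
  intro h
  exact hb ((hu.dvd_mul_left).mp h)

/-- Existence of an approximate root of `Q b ·` modulo `p^F` within `pℤ_p`. -/
lemma exists_root_mod (α₁ α₂ α₃ : ℤ) (F : ℕ) {b : ℤ_[p]} (hb : (p : ℤ_[p]) ∣ b) :
    ∃ c : ℤ_[p], (p : ℤ_[p]) ∣ c ∧ (p : ℤ_[p]) ^ F ∣ Q α₁ α₂ α₃ b c := by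
  induction F with
  | zero => exact ⟨0, dvd_zero _, by simp⟩
  | succ F ih =>
    obtain ⟨c, hc, hQc⟩ := ih
    have hQc1 : (p : ℤ_[p]) ∣ Q α₁ α₂ α₃ b c := by
      rw [Q_eq]
      exact dvd_add (dvd_pow hb (by norm_num)) (hc.mul_right _)
    refine ⟨c - Q α₁ α₂ α₃ b c, dvd_sub hc hQc1, ?_⟩
    have key := Q_sub_Q_c α₁ α₂ α₃ b (c - Q α₁ α₂ α₃ b c) c
    have : Q α₁ α₂ α₃ b (c - Q α₁ α₂ α₃ b c)
        = Q α₁ α₂ α₃ b c * (1 - (1 - ((α₁ : ℤ_[p]) * b ^ 2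
          + (α₂ : ℤ_[p]) * b * ((c - Q α₁ α₂ α₃ b c) + c)
          + (α₃ : ℤ_[p]) * ((c - Q α₁ α₂ α₃ b c) + c)))) := by
      linear_combination key
    rw [this, pow_succ]
    apply mul_dvd_mul hQc
    have h2c : (p : ℤ_[p]) ∣ (c - Q α₁ α₂ α₃ b c) + c := dvd_add (dvd_sub hc hQc1) hc
    simp only [sub_sub_cancel]
    exact dvd_add (dvd_add ((dvd_pow hb (by norm_num)).mul_left _) (h2c.mul_left _))
      (h2c.mul_left _)

/-- Uniqueness modulo `p^F` of roots of `Q b ·` in `pℤ_p`. -/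
lemma root_unique (α₁ α₂ α₃ : ℤ) {F : ℕ} {b x y : ℤ_[p]} (hb : (p : ℤ_[p]) ∣ b)
    (hx : (p : ℤ_[p]) ∣ x) (hy : (p : ℤ_[p]) ∣ y)
    (hQx : (p : ℤ_[p]) ^ F ∣ Q α₁ α₂ α₃ b x) (hQy : (p : ℤ_[p]) ^ F ∣ Q α₁ α₂ α₃ b y) :
    (p : ℤ_[p]) ^ F ∣ x - y := by
  have key := Q_sub_Q_c α₁ α₂ α₃ b x y
  have hU : IsUnit (1 - ((α₁ : ℤ_[p]) * b ^ 2 + (α₂ : ℤ_[p]) * b * (x + y)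
      + (α₃ : ℤ_[p]) * (x + y))) := by
    apply isUnit_one_sub
    exact dvd_add (dvd_add ((dvd_pow hb (by norm_num)).mul_left _)
      ((dvd_add hx hy).mul_left _)) ((dvd_add hx hy).mul_left _)
  have h1 : (p : ℤ_[p]) ^ F ∣ (x - y) * (1 - ((α₁ : ℤ_[p]) * b ^ 2
      + (α₂ : ℤ_[p]) * b * (x + y) + (α₃ : ℤ_[p]) * (x + y))) := by
    rw [← key]; exact dvd_sub hQx hQy
  exact (hU.dvd_mul_right).mp h1

/-- Transfer of the `Q`-divisibility along congruences in `b`. -/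
lemma Q_transfer_b (α₁ α₂ α₃ : ℤ) {F : ℕ} {b b' c : ℤ_[p]}
    (hbb' : (p : ℤ_[p]) ^ F ∣ b - b') (h : (p : ℤ_[p]) ^ F ∣ Q α₁ α₂ α₃ b' c) :
    (p : ℤ_[p]) ^ F ∣ Q α₁ α₂ α₃ b c := by
  have key := Q_sub_Q_b α₁ α₂ α₃ b b' c
  have h1 : (p : ℤ_[p]) ^ F ∣ Q α₁ α₂ α₃ b c - Q α₁ α₂ α₃ b' c := by
    rw [key]; exact hbb'.mul_right _
  simpa using dvd_add h1 h

/-- Transfer of the `Q`-divisibility along congruences in `c`. -/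
lemma Q_transfer_c (α₁ α₂ α₃ : ℤ) {F : ℕ} {b c c' : ℤ_[p]}
    (hcc' : (p : ℤ_[p]) ^ F ∣ c - c') (h : (p : ℤ_[p]) ^ F ∣ Q α₁ α₂ α₃ b c') :
    (p : ℤ_[p]) ^ F ∣ Q α₁ α₂ α₃ b c := by
  have key := Q_sub_Q_c α₁ α₂ α₃ b c c'
  have h1 : (p : ℤ_[p]) ^ F ∣ Q α₁ α₂ α₃ b c - Q α₁ α₂ α₃ b c' := by
    rw [key]; exact hcc'.mul_right _
  simpa using dvd_add h1 h

end Stmt9Aux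

namespace Stmt9Aux
variable {p : ℕ} [hp : Fact p.Prime]

lemma dvd_of_congr {n k : ℕ} (hkn : k ≤ n) {x y : ℤ_[p]} (h : (p : ℤ_[p]) ^ n ∣ x - y)
    (hy : (p : ℤ_[p]) ^ k ∣ y) : (p : ℤ_[p]) ^ k ∣ x := by
  have h' : (p : ℤ_[p]) ^ k ∣ x - y := (pow_dvd_pow _ hkn).trans h
  simpa using dvd_add h' hy

lemma not_dvd_of_congr {n k : ℕ} (hkn : k ≤ n) {x y : ℤ_[p]} (h : (p : ℤ_[p]) ^ n ∣ x - y)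
    (hy : ¬ (p : ℤ_[p]) ^ k ∣ y) : ¬ (p : ℤ_[p]) ^ k ∣ x := by
  intro hx
  have h' : (p : ℤ_[p]) ^ n ∣ y - x := by simpa [neg_sub] using h.neg_right
  exact hy (dvd_of_congr hkn h' hx)

lemma centers_not_congr {B k : ℕ} {m m' : ℕ} (hm : m < p ^ k) (hm' : m' < p ^ k)
    (hne : m ≠ m') :
    ¬ (p : ℤ_[p]) ^ (B + k) ∣ (p : ℤ_[p]) ^ B * (m : ℤ_[p]) - (p : ℤ_[p]) ^ B * (m' : ℤ_[p]) := by
  intro h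
  rw [← mul_sub, pow_add] at h
  have h2 := (mul_dvd_mul_iff_left (pow_ne_zero B (p_ne_zero' (p := p)))).mp h
  exact not_dvd_natCast_sub hm hm' hne h2

lemma not_dvd_center {B : ℕ} {m : ℕ} (hm : ¬ p ∣ m) :
    ¬ (p : ℤ_[p]) ^ (B + 1) ∣ (p : ℤ_[p]) ^ B * (m : ℤ_[p]) := by
  intro h
  rw [pow_succ] at h
  have h2 := (mul_dvd_mul_iff_left (pow_ne_zero B (p_ne_zero' (p := p)))).mp h
  rw [show (p : ℤ_[p]) = (p : ℤ_[p]) ^ 1 by rw [pow_one]] at h2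
  rw [dvd_natCast_iff, pow_one] at h2
  exact hm h2

/-- Digit decomposition of an element of exact valuation `B` to precision `n`. -/
lemma exists_unit_digit {B n : ℕ} (hn : B < n) {b : ℤ_[p]} (hb1 : (p : ℤ_[p]) ^ B ∣ b)
    (hb2 : ¬ (p : ℤ_[p]) ^ (B + 1) ∣ b) :
    ∃ m : ℕ, m < p ^ (n - B) ∧ ¬ p ∣ m ∧
      (p : ℤ_[p]) ^ n ∣ b - (p : ℤ_[p]) ^ B * (m : ℤ_[p]) := by
  have hi : (p : ℤ_[p]) ^ n ∣ b - (b.appr n : ℤ_[p]) := by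
    have := b.appr_spec n
    rwa [Ideal.mem_span_singleton] at this
  have hilt : b.appr n < p ^ n := b.appr_lt n
  have hiB : (p : ℤ_[p]) ^ B ∣ ((b.appr n : ℕ) : ℤ_[p]) := by
    have := ((pow_dvd_pow (p : ℤ_[p]) hn.le).trans hi).neg_right
    simpa using dvd_add hb1 this
  rw [dvd_natCast_iff] at hiB
  obtain ⟨m, hm⟩ := hiB
  refine ⟨m, ?_, ?_, ?_⟩
  · have hpB : 0 < p ^ B := pow_pos hp.1.pos B
    have : p ^ B * m < p ^ B * p ^ (n - B) := by
      rw [← pow_add, Nat.add_sub_cancel' hn.le, ← hm]; exact hilt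
    exact lt_of_mul_lt_mul_left this (Nat.zero_le _)
  · intro hpm
    apply hb2
    have h1 : (p : ℤ_[p]) ^ (B + 1) ∣ b - (b.appr n : ℤ_[p]) := (pow_dvd_pow _ hn).trans hi
    have h2 : (p : ℤ_[p]) ^ (B + 1) ∣ ((b.appr n : ℕ) : ℤ_[p]) := by
      rw [dvd_natCast_iff, hm, pow_succ]
      exact mul_dvd_mul dvd_rfl hpm
    exact dvd_of_congr le_rfl h1 h2
  · have : ((b.appr n : ℕ) : ℤ_[p]) = (p : ℤ_[p]) ^ B * (m : ℤ_[p]) := by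
      rw [hm]; push_cast; ring
    rwa [← this]

/-- Automatic `F`-condition when `F ≤ min(3B, C)`. -/
lemma auto_F (α₁ α₂ α₃ : ℤ) {B C F : ℕ} (hF3 : F ≤ 3 * B) (hFC : F ≤ C) {b c : ℤ_[p]}
    (hb : (p : ℤ_[p]) ^ B ∣ b) (hc : (p : ℤ_[p]) ^ C ∣ c) :
    (p : ℤ_[p]) ^ F ∣ Q α₁ α₂ α₃ b c := by
  have hb3 : (p : ℤ_[p]) ^ F ∣ b ^ 3 := by
    calc (p : ℤ_[p]) ^ F ∣ (p : ℤ_[p]) ^ (3 * B) := pow_dvd_pow _ hF3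
    _ = ((p : ℤ_[p]) ^ B) ^ 3 := by rw [← pow_mul, mul_comm]
    _ ∣ b ^ 3 := pow_dvd_pow_of_dvd hb 3
  have hcF : (p : ℤ_[p]) ^ F ∣ c := (pow_dvd_pow _ hFC).trans hc
  rw [Q_eq]
  exact dvd_add hb3 (hcF.mul_right _)

/-- Automatic `H`-condition when `H ≤ min(B, C)`. -/
lemma auto_H (α₁ α₂ : ℤ) {B C H : ℕ} (hHB : H ≤ B) (hHC : H ≤ C) {b c : ℤ_[p]}
    (hb : (p : ℤ_[p]) ^ B ∣ b) (hc : (p : ℤ_[p]) ^ C ∣ c) :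
    (p : ℤ_[p]) ^ H ∣ (α₁ : ℤ_[p]) * b + (α₂ : ℤ_[p]) * c :=
  dvd_add (((pow_dvd_pow _ hHB).trans hb).mul_left _) (((pow_dvd_pow _ hHC).trans hc).mul_left _)

end Stmt9Aux

/-- The set of pairs `(b,c) ∈ ℤ_p²` with `v(b) = B`, `v(c) = C`, `v(α₁b + α₂c) ≥ H` and
`v(b³ − α₁b²c − α₂bc² + c − α₃c²) ≥ F` (valuation conditions are expressed via divisibility
by powers of `p`, with the convention `v(0) = ∞`). -/
def eSet (p : ℕ) [Fact p.Prime] (α₁ α₂ α₃ : ℤ) (B C F H : ℕ) : Set (ℤ_[p] × ℤ_[p]) :=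
  {bc : ℤ_[p] × ℤ_[p] |
    ((p : ℤ_[p]) ^ B ∣ bc.1 ∧ ¬ (p : ℤ_[p]) ^ (B + 1) ∣ bc.1) ∧
    ((p : ℤ_[p]) ^ C ∣ bc.2 ∧ ¬ (p : ℤ_[p]) ^ (C + 1) ∣ bc.2) ∧
    (p : ℤ_[p]) ^ H ∣ ((α₁ : ℤ_[p]) * bc.1 + (α₂ : ℤ_[p]) * bc.2) ∧
    (p : ℤ_[p]) ^ F ∣
      (bc.1 ^ 3 - (α₁ : ℤ_[p]) * bc.1 ^ 2 * bc.2 - (α₂ : ℤ_[p]) * bc.1 * bc.2 ^ 2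
        + bc.2 - (α₃ : ℤ_[p]) * bc.2 ^ 2)}

namespace Stmt9Aux
variable {p : ℕ} [hp : Fact p.Prime]

lemma mem_eSet_iff {α₁ α₂ α₃ : ℤ} {B C F H : ℕ} {b c : ℤ_[p]} :
    (b, c) ∈ eSet p α₁ α₂ α₃ B C F H ↔
      ((p : ℤ_[p]) ^ B ∣ b ∧ ¬ (p : ℤ_[p]) ^ (B + 1) ∣ b) ∧
      ((p : ℤ_[p]) ^ C ∣ c ∧ ¬ (p : ℤ_[p]) ^ (C + 1) ∣ c) ∧
      (p : ℤ_[p]) ^ H ∣ ((α₁ : ℤ_[p]) * b + (α₂ : ℤ_[p]) * c) ∧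
      (p : ℤ_[p]) ^ F ∣ Q α₁ α₂ α₃ b c := by
  simp only [eSet, Set.mem_setOf_eq, Q]

lemma not_dvd_of_Ico {u : ℕ} (hu1 : 1 ≤ u) (hup : u < p) : ¬ p ∣ u := fun h =>
  absurd (Nat.le_of_dvd (by omega) h) (by omega)

variable [MeasurableSpace ℤ_[p]] [BorelSpace ℤ_[p]]
variable (μ : Measure (ℤ_[p] × ℤ_[p])) [μ.IsAddHaarMeasure]

lemma case1_measure (hμ : μ Set.univ = 1) (α₁ α₂ α₃ : ℤ) {B C F H : ℕ}
    (hF3 : F ≤ 3 * B) (hFC : F ≤ C) (hHB : H ≤ B) (hHC : H ≤ C) :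
    μ (eSet p α₁ α₂ α₃ B C F H)
      = (((p - 1) * (p - 1) : ℕ) : ℝ≥0∞) * ((p : ℝ≥0∞) ^ ((B + 1) + (C + 1)))⁻¹ := by
  classical
  have hset : eSet p α₁ α₂ α₃ B C F H =
      ⋃ uw ∈ (Finset.Ico 1 p ×ˢ Finset.Ico 1 p : Finset (ℕ × ℕ)),
        coset p (B + 1) (C + 1)
          ((p : ℤ_[p]) ^ B * (uw.1 : ℤ_[p]), (p : ℤ_[p]) ^ C * (uw.2 : ℤ_[p])) := by
    ext bc
    obtain ⟨b, c⟩ := bc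
    rw [mem_eSet_iff]
    simp only [Set.mem_iUnion, Finset.mem_product, Finset.mem_Ico, coset, Set.mem_setOf_eq]
    constructor
    · rintro ⟨⟨hb1, hb2⟩, ⟨hc1, hc2⟩, hlin, hQ⟩
      obtain ⟨u, hu_lt, hu_nd, hu_cong⟩ := exists_unit_digit (Nat.lt_succ_self B) hb1 hb2
      obtain ⟨w, hw_lt, hw_nd, hw_cong⟩ := exists_unit_digit (Nat.lt_succ_self C) hc1 hc2
      rw [show B + 1 - B = 1 by omega, pow_one] at hu_lt
      rw [show C + 1 - C = 1 by omega, pow_one] at hw_lt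
      have hu0 : u ≠ 0 := fun h => hu_nd (by rw [h]; exact dvd_zero p)
      have hw0 : w ≠ 0 := fun h => hw_nd (by rw [h]; exact dvd_zero p)
      exact ⟨(u, w), ⟨⟨Nat.pos_of_ne_zero hu0, hu_lt⟩,
        ⟨Nat.pos_of_ne_zero hw0, hw_lt⟩⟩, hu_cong, hw_cong⟩
    · rintro ⟨⟨u, w⟩, ⟨⟨hu1, hup⟩, ⟨hw1, hwp⟩⟩, hcb, hcc⟩
      have hb1 : (p : ℤ_[p]) ^ B ∣ b :=
        dvd_of_congr (Nat.le_succ B) hcb (Dvd.dvd.mul_right dvd_rfl _)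
      have hb2 : ¬ (p : ℤ_[p]) ^ (B + 1) ∣ b :=
        not_dvd_of_congr le_rfl hcb (not_dvd_center (not_dvd_of_Ico hu1 hup))
      have hc1 : (p : ℤ_[p]) ^ C ∣ c :=
        dvd_of_congr (Nat.le_succ C) hcc (Dvd.dvd.mul_right dvd_rfl _)
      have hc2 : ¬ (p : ℤ_[p]) ^ (C + 1) ∣ c :=
        not_dvd_of_congr le_rfl hcc (not_dvd_center (not_dvd_of_Ico hw1 hwp))
      exact ⟨⟨hb1, hb2⟩, ⟨hc1, hc2⟩, auto_H α₁ α₂ hHB hHC hb1 hc1,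
        auto_F α₁ α₂ α₃ hF3 hFC hb1 hc1⟩
  have hdisj : ∀ i ∈ (Finset.Ico 1 p ×ˢ Finset.Ico 1 p : Finset (ℕ × ℕ)),
      ∀ j ∈ (Finset.Ico 1 p ×ˢ Finset.Ico 1 p : Finset (ℕ × ℕ)), i ≠ j →
      Disjoint (coset p (B + 1) (C + 1)
          ((p : ℤ_[p]) ^ B * (i.1 : ℤ_[p]), (p : ℤ_[p]) ^ C * (i.2 : ℤ_[p])))
        (coset p (B + 1) (C + 1)
          ((p : ℤ_[p]) ^ B * (j.1 : ℤ_[p]), (p : ℤ_[p]) ^ C * (j.2 : ℤ_[p]))) := by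
    rintro ⟨u, w⟩ hi ⟨u', w'⟩ hj hij
    simp only [Finset.mem_product, Finset.mem_Ico] at hi hj
    apply coset_disjoint
    by_cases h1 : u = u'
    · subst h1
      have h2 : w ≠ w' := fun h2 => hij (by rw [h2])
      exact Or.inr (centers_not_congr (k := 1) (by rw [pow_one]; exact hi.2.2)
        (by rw [pow_one]; exact hj.2.2) h2)
    · exact Or.inl (centers_not_congr (k := 1) (by rw [pow_one]; exact hi.1.2)
        (by rw [pow_one]; exact hj.1.2) h1)
  rw [hset, measure_biUnion_cosets μ hμ _ _ (B + 1) (C + 1) hdisj, Finset.card_product,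
    Nat.card_Ico]

end Stmt9Aux

namespace Stmt9Aux
variable {p : ℕ} [hp : Fact p.Prime]

lemma dvd_mul_of_dvd_dvd {a b : ℕ} {x y : ℤ_[p]} (hx : (p : ℤ_[p]) ^ a ∣ x)
    (hy : (p : ℤ_[p]) ^ b ∣ y) : (p : ℤ_[p]) ^ (a + b) ∣ x * y := by
  rw [pow_add]; exact mul_dvd_mul hx hy

lemma dvd_pow_of_dvd {B e : ℕ} {b : ℤ_[p]} (hb : (p : ℤ_[p]) ^ B ∣ b) :
    (p : ℤ_[p]) ^ (B * e) ∣ b ^ e := by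
  rw [pow_mul]; exact pow_dvd_pow_of_dvd hb e

lemma dvd_down {k a : ℕ} (hka : k ≤ a) {x : ℤ_[p]} (hx : (p : ℤ_[p]) ^ a ∣ x) :
    (p : ℤ_[p]) ^ k ∣ x := (pow_dvd_pow _ hka).trans hx

lemma case2_empty (α₁ α₂ α₃ : ℤ) (hα₁ : ¬ (p : ℤ) ∣ α₁) (hα₂ : ¬ (p : ℤ) ∣ α₂)
    {B C F H : ℕ} (hB : 1 ≤ B) (hC : 1 ≤ C)
    (h : (min (3 * B) C < F ∧ 3 * B ≠ C) ∨ (min B C < H ∧ B ≠ C)) :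
    eSet p α₁ α₂ α₃ B C F H = ∅ := by
  ext bc
  obtain ⟨b, c⟩ := bc
  simp only [Set.mem_empty_iff_false, iff_false]
  rw [mem_eSet_iff]
  rintro ⟨⟨hb1, hb2⟩, ⟨hc1, hc2⟩, hlin, hQ⟩
  rcases h with ⟨hminF, hne⟩ | ⟨hminH, hne⟩
  · rcases Nat.lt_or_ge (3 * B) C with h3C | hC3
    · -- 3B < C : contradiction with valuation of b³
      have hQ' : (p : ℤ_[p]) ^ (3 * B + 1) ∣ Q α₁ α₂ α₃ b c := dvd_down (by omega) hQ
      have hc' : (p : ℤ_[p]) ^ (3 * B + 1) ∣ c := dvd_down (by omega) hc1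
      have hb3 : b ^ 3 = Q α₁ α₂ α₃ b c + ((α₁ : ℤ_[p]) * (b ^ 2 * c)
          + (α₂ : ℤ_[p]) * (b * c ^ 2) - c + (α₃ : ℤ_[p]) * c ^ 2) := by
        simp only [Q]; ring
      have hrest : (p : ℤ_[p]) ^ (3 * B + 1) ∣ ((α₁ : ℤ_[p]) * (b ^ 2 * c)
          + (α₂ : ℤ_[p]) * (b * c ^ 2) - c + (α₃ : ℤ_[p]) * c ^ 2) := by
        refine dvd_add (dvd_sub (dvd_add ?_ ?_) hc') ?_
        · exact ((hc'.mul_left _).mul_left _)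
        · exact (((dvd_pow hc' two_ne_zero).mul_left _).mul_left _)
        · exact ((dvd_pow hc' two_ne_zero).mul_left _)
      have : (p : ℤ_[p]) ^ (3 * B + 1) ∣ b ^ 3 := by
        rw [hb3]; exact dvd_add hQ' hrest
      exact not_dvd_cube hb1 hb2 this
    · -- C < 3B : contradiction with valuation of c
      have hC3' : C < 3 * B := by omega
      have hQ' : (p : ℤ_[p]) ^ (C + 1) ∣ Q α₁ α₂ α₃ b c := dvd_down (by omega) hQ
      have hceq : c = Q α₁ α₂ α₃ b c - b ^ 3 + (α₁ : ℤ_[p]) * (b ^ 2 * c)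
          + (α₂ : ℤ_[p]) * (b * c ^ 2) + (α₃ : ℤ_[p]) * c ^ 2 := by
        simp only [Q]; ring
      have hb3 : (p : ℤ_[p]) ^ (C + 1) ∣ b ^ 3 :=
        dvd_down (by omega) (dvd_pow_of_dvd (e := 3) hb1)
      have hb2c : (p : ℤ_[p]) ^ (C + 1) ∣ b ^ 2 * c :=
        dvd_down (by omega : C + 1 ≤ B * 2 + C) (dvd_mul_of_dvd_dvd (dvd_pow_of_dvd hb1) hc1)
      have hbc2 : (p : ℤ_[p]) ^ (C + 1) ∣ b * c ^ 2 := by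
        have : (p : ℤ_[p]) ^ (B + C * 2) ∣ b * c ^ 2 :=
          dvd_mul_of_dvd_dvd (by simpa using hb1) (dvd_pow_of_dvd hc1)
        exact dvd_down (by omega) this
      have hc2' : (p : ℤ_[p]) ^ (C + 1) ∣ c ^ 2 :=
        dvd_down (by omega : C + 1 ≤ C * 2) (dvd_pow_of_dvd hc1)
      have : (p : ℤ_[p]) ^ (C + 1) ∣ c := by
        rw [hceq]
        exact dvd_add (dvd_add (dvd_add (dvd_sub hQ' hb3) (hb2c.mul_left _))
          (hbc2.mul_left _)) (hc2'.mul_left _)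
      exact hc2 this
  · have hα₁u : IsUnit ((α₁ : ℤ) : ℤ_[p]) := isUnit_intCast_of_not_dvd hα₁
    have hα₂u : IsUnit ((α₂ : ℤ) : ℤ_[p]) := isUnit_intCast_of_not_dvd hα₂
    rcases Nat.lt_or_ge B C with hBC | hCB
    · have hlin' : (p : ℤ_[p]) ^ (B + 1) ∣ ((α₁ : ℤ_[p]) * b + (α₂ : ℤ_[p]) * c) :=
        dvd_down (by omega) hlin
      have hc' : (p : ℤ_[p]) ^ (B + 1) ∣ (α₂ : ℤ_[p]) * c :=
        (dvd_down (by omega) hc1).mul_left _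
      have hab : (p : ℤ_[p]) ^ (B + 1) ∣ (α₁ : ℤ_[p]) * b := by
        have heq : (α₁ : ℤ_[p]) * b
            = ((α₁ : ℤ_[p]) * b + (α₂ : ℤ_[p]) * c) - (α₂ : ℤ_[p]) * c := by ring
        rw [heq]; exact dvd_sub hlin' hc'
      exact hb2 ((hα₁u.dvd_mul_left).mp hab)
    · have hCB' : C < B := by omega
      have hlin' : (p : ℤ_[p]) ^ (C + 1) ∣ ((α₁ : ℤ_[p]) * b + (α₂ : ℤ_[p]) * c) :=
        dvd_down (by omega) hlin
      have hb' : (p : ℤ_[p]) ^ (C + 1) ∣ (α₁ : ℤ_[p]) * b :=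
        (dvd_down (by omega) hb1).mul_left _
      have hac : (p : ℤ_[p]) ^ (C + 1) ∣ (α₂ : ℤ_[p]) * c := by
        have heq : (α₂ : ℤ_[p]) * c
            = ((α₁ : ℤ_[p]) * b + (α₂ : ℤ_[p]) * c) - (α₁ : ℤ_[p]) * b := by ring
        rw [heq]; exact dvd_sub hlin' hb'
      exact hc2 ((hα₂u.dvd_mul_left).mp hac)

end Stmt9Aux

namespace Stmt9Aux
variable {p : ℕ} [hp : Fact p.Prime]

lemma m_lt {k u t : ℕ} (hu : u < p) (ht : t < p ^ k) : u + p * t < p ^ (k + 1) := by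
  calc u + p * t < p + p * t := by omega
  _ = p * (1 + t) := by ring
  _ ≤ p * p ^ k := Nat.mul_le_mul_left p (by omega)
  _ = p ^ (k + 1) := by ring

lemma m_inj {u u' t t' : ℕ} (hu : u < p) (hu' : u' < p)
    (h : u + p * t = u' + p * t') : u = u' ∧ t = t' := by
  have h1 : u = u' := by
    have h2 := congrArg (· % p) h
    simpa [Nat.add_mul_mod_self_left, Nat.mod_eq_of_lt hu, Nat.mod_eq_of_lt hu'] using h2
  refine ⟨h1, ?_⟩
  subst h1
  exact Nat.eq_of_mul_eq_mul_left hp.1.pos (show p * t = p * t' by omega)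

lemma m_not_dvd {u t : ℕ} (hu1 : 1 ≤ u) (hup : u < p) : ¬ p ∣ (u + p * t) := by
  intro hdvd
  rw [add_comm] at hdvd
  exact not_dvd_of_Ico hu1 hup ((Nat.dvd_add_right (dvd_mul_right p t)).mp hdvd)

variable [MeasurableSpace ℤ_[p]] [BorelSpace ℤ_[p]]
variable (μ : Measure (ℤ_[p] × ℤ_[p])) [μ.IsAddHaarMeasure]

lemma case3_measure (hμ : μ Set.univ = 1) (α₁ α₂ α₃ : ℤ) {B F H : ℕ}
    (hB : 1 ≤ B) (hF : 3 * B < F) (hH : H ≤ B) :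
    μ (eSet p α₁ α₂ α₃ B (3 * B) F H)
      = (((p - 1) * p ^ (F - B - 1) : ℕ) : ℝ≥0∞) * ((p : ℝ≥0∞) ^ (F + F))⁻¹ := by
  classical
  have hBF : B + 1 ≤ F := by omega
  have h3B1F : 3 * B + 1 ≤ F := by omega
  set k := F - B - 1 with hk
  have hpb : ∀ m : ℕ, (p : ℤ_[p]) ∣ (p : ℤ_[p]) ^ B * (m : ℤ_[p]) :=
    fun m => (dvd_pow_self _ (by omega : B ≠ 0)).mul_right _
  set bf : ℕ → ℤ_[p] := fun m => (p : ℤ_[p]) ^ B * (m : ℤ_[p]) with hbf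
  set cf : ℕ → ℤ_[p] := fun m => (exists_root_mod α₁ α₂ α₃ (p := p) F (hpb m)).choose
    with hcfdef
  have hcf : ∀ m : ℕ, (p : ℤ_[p]) ∣ cf m ∧
      (p : ℤ_[p]) ^ F ∣ Q α₁ α₂ α₃ (bf m) (cf m) :=
    fun m => (exists_root_mod α₁ α₂ α₃ (p := p) F (hpb m)).choose_spec
  set f : ℕ × ℕ → ℤ_[p] × ℤ_[p] := fun uw => (bf (uw.1 + p * uw.2), cf (uw.1 + p * uw.2))
    with hfdef
  set s : Finset (ℕ × ℕ) := Finset.Ico 1 p ×ˢ Finset.range (p ^ k) with hs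
  have hcenter : ∀ m : ℕ, ¬ p ∣ m →
      ((p : ℤ_[p]) ^ B ∣ bf m ∧ ¬ (p : ℤ_[p]) ^ (B + 1) ∣ bf m) ∧
      ((p : ℤ_[p]) ^ (3 * B) ∣ cf m ∧ ¬ (p : ℤ_[p]) ^ (3 * B + 1) ∣ cf m) := by
    intro m hm
    have hb1 : (p : ℤ_[p]) ^ B ∣ bf m := Dvd.dvd.mul_right dvd_rfl _
    have hb2 : ¬ (p : ℤ_[p]) ^ (B + 1) ∣ bf m := not_dvd_center hm
    refine ⟨⟨hb1, hb2⟩, ?_⟩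
    obtain ⟨hcp, hcQ⟩ := hcf m
    set E : ℤ_[p] := (α₁ : ℤ_[p]) * (bf m) ^ 2 + (α₂ : ℤ_[p]) * (bf m) * (cf m)
      + (α₃ : ℤ_[p]) * (cf m) with hE
    have hU : IsUnit (1 - E) := by
      apply isUnit_one_sub
      rw [hE]
      exact dvd_add (dvd_add ((dvd_pow (hpb m) two_ne_zero).mul_left _)
        (hcp.mul_left _)) (hcp.mul_left _)
    have hcu : cf m * (1 - E) = Q α₁ α₂ α₃ (bf m) (cf m) - (bf m) ^ 3 := by
      rw [Q_eq, hE]; ring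
    have hb3 : (p : ℤ_[p]) ^ (3 * B) ∣ (bf m) ^ 3 := by
      have := dvd_pow_of_dvd (e := 3) hb1
      rwa [show B * 3 = 3 * B by ring] at this
    constructor
    · have h1 : (p : ℤ_[p]) ^ (3 * B) ∣ cf m * (1 - E) := by
        rw [hcu]; exact dvd_sub (dvd_down (by omega) hcQ) hb3
      exact (hU.dvd_mul_right).mp h1
    · intro hcon
      have h2 : (p : ℤ_[p]) ^ (3 * B + 1) ∣ cf m * (1 - E) := hcon.mul_right _
      have h3 : (p : ℤ_[p]) ^ (3 * B + 1) ∣ (bf m) ^ 3 := by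
        have heq : (bf m) ^ 3 = Q α₁ α₂ α₃ (bf m) (cf m) - cf m * (1 - E) := by
          rw [Q_eq, hE]; ring
        rw [heq]; exact dvd_sub (dvd_down h3B1F hcQ) h2
      exact not_dvd_cube hb1 hb2 h3
  have hset : eSet p α₁ α₂ α₃ B (3 * B) F H = ⋃ uw ∈ s, coset p F F (f uw) := by
    ext bc; obtain ⟨b, c⟩ := bc
    rw [mem_eSet_iff]
    simp only [Set.mem_iUnion, exists_prop, hs, Finset.mem_product, Finset.mem_Ico,
      Finset.mem_range, coset, Set.mem_setOf_eq]
    constructor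
    · rintro ⟨⟨hb1, hb2⟩, ⟨hc1, hc2⟩, hlin, hQb⟩
      obtain ⟨m, hm_lt, hm_nd, hm_cong⟩ := exists_unit_digit (show B < F by omega) hb1 hb2
      rw [show F - B = k + 1 by omega] at hm_lt
      have hmm : m % p + p * (m / p) = m := Nat.mod_add_div m p
      refine ⟨(m % p, m / p), ⟨⟨?_, Nat.mod_lt m hp.1.pos⟩, ?_⟩, ?_, ?_⟩
      · rcases Nat.eq_zero_or_pos (m % p) with h0 | h0
        · exact (hm_nd (Nat.dvd_of_mod_eq_zero h0)).elim
        · exact h0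
      · apply Nat.div_lt_of_lt_mul
        calc m < p ^ (k + 1) := hm_lt
        _ = p * p ^ k := by ring
      · show (p : ℤ_[p]) ^ F ∣ b - bf (m % p + p * (m / p))
        rw [hmm]
        exact hm_cong
      · show (p : ℤ_[p]) ^ F ∣ c - cf (m % p + p * (m / p))
        rw [hmm]
        obtain ⟨hcp, hcQ⟩ := hcf m
        have hpc : (p : ℤ_[p]) ∣ c := (dvd_pow_self _ (by omega : 3 * B ≠ 0)).trans hc1
        have hbb' : (p : ℤ_[p]) ^ F ∣ bf m - b := by
          simpa [neg_sub] using hm_cong.neg_right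
        have hQbfm : (p : ℤ_[p]) ^ F ∣ Q α₁ α₂ α₃ (bf m) c := Q_transfer_b α₁ α₂ α₃ hbb' hQb
        exact root_unique α₁ α₂ α₃ (hpb m) hpc hcp hQbfm hcQ
    · rintro ⟨⟨u, t⟩, ⟨⟨hu1, hup⟩, ht⟩, hcb, hcc⟩
      have hm_nd : ¬ p ∣ (u + p * t) := m_not_dvd hu1 hup
      obtain ⟨⟨hb1', hb2'⟩, ⟨hc1', hc2'⟩⟩ := hcenter (u + p * t) hm_nd
      have hcbm : (p : ℤ_[p]) ^ F ∣ b - bf (u + p * t) := hcb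
      have hccm : (p : ℤ_[p]) ^ F ∣ c - cf (u + p * t) := hcc
      have hbB : (p : ℤ_[p]) ^ B ∣ b := dvd_of_congr (by omega) hcbm hb1'
      have hc3B : (p : ℤ_[p]) ^ (3 * B) ∣ c := dvd_of_congr (by omega) hccm hc1'
      refine ⟨⟨hbB, not_dvd_of_congr hBF hcbm hb2'⟩,
        ⟨hc3B, not_dvd_of_congr h3B1F hccm hc2'⟩, ?_, ?_⟩
      · exact auto_H α₁ α₂ hH (by omega) hbB hc3B
      · obtain ⟨hcp, hcQ⟩ := hcf (u + p * t)
        exact Q_transfer_c α₁ α₂ α₃ hccm (Q_transfer_b α₁ α₂ α₃ hcbm hcQ)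
  have hdisj : ∀ i ∈ s, ∀ j ∈ s, i ≠ j →
      Disjoint (coset p F F (f i)) (coset p F F (f j)) := by
    rintro ⟨u, t⟩ hi ⟨u', t'⟩ hj hij
    simp only [hs, Finset.mem_product, Finset.mem_Ico, Finset.mem_range] at hi hj
    apply coset_disjoint
    left
    have hne : u + p * t ≠ u' + p * t' := by
      intro he
      obtain ⟨h1, h2⟩ := m_inj hi.1.2 hj.1.2 he
      exact hij (by rw [h1, h2])
    have := centers_not_congr (B := B) (m_lt hi.1.2 hi.2) (m_lt hj.1.2 hj.2) hne
    rwa [show B + (k + 1) = F by omega] at this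
  rw [hset, measure_biUnion_cosets μ hμ s f F F hdisj, hs, Finset.card_product,
    Nat.card_Ico, Finset.card_range]

end Stmt9Aux

namespace Stmt9Aux
variable {p : ℕ} [hp : Fact p.Prime]
variable [MeasurableSpace ℤ_[p]] [BorelSpace ℤ_[p]]
variable (μ : Measure (ℤ_[p] × ℤ_[p])) [μ.IsAddHaarMeasure]

lemma case4_measure (hμ : μ Set.univ = 1) (α₁ α₂ α₃ : ℤ)
    (hα₁ : ¬ (p : ℤ) ∣ α₁) (hα₂ : ¬ (p : ℤ) ∣ α₂) {B F H : ℕ}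
    (hB : 1 ≤ B) (hH : B < H) (hF : F ≤ B) :
    μ (eSet p α₁ α₂ α₃ B B F H)
      = (((p - 1) * p ^ (H - B - 1) : ℕ) : ℝ≥0∞) * ((p : ℝ≥0∞) ^ (H + H))⁻¹ := by
  classical
  have hBH : B + 1 ≤ H := by omega
  set k := H - B - 1 with hk
  have hα₁u : IsUnit ((α₁ : ℤ) : ℤ_[p]) := isUnit_intCast_of_not_dvd hα₁
  have hα₂u : IsUnit ((α₂ : ℤ) : ℤ_[p]) := isUnit_intCast_of_not_dvd hα₂
  set β : ℤ_[p] := ↑hα₂u.unit⁻¹ with hβdef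
  have hβ : (α₂ : ℤ_[p]) * β = 1 := hα₂u.mul_val_inv
  set bf : ℕ → ℤ_[p] := fun m => (p : ℤ_[p]) ^ B * (m : ℤ_[p]) with hbf
  set cf : ℕ → ℤ_[p] := fun m => (-(α₁ : ℤ_[p]) * β) * bf m with hcfdef
  set f : ℕ × ℕ → ℤ_[p] × ℤ_[p] := fun uw => (bf (uw.1 + p * uw.2), cf (uw.1 + p * uw.2))
    with hfdef
  set s : Finset (ℕ × ℕ) := Finset.Ico 1 p ×ˢ Finset.range (p ^ k) with hs
  have hUnit : IsUnit (-(α₁ : ℤ_[p]) * β) := by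
    refine IsUnit.mul hα₁u.neg ?_
    exact (hα₂u.unit⁻¹).isUnit
  have hcenter : ∀ m : ℕ, ¬ p ∣ m →
      ((p : ℤ_[p]) ^ B ∣ bf m ∧ ¬ (p : ℤ_[p]) ^ (B + 1) ∣ bf m) ∧
      ((p : ℤ_[p]) ^ B ∣ cf m ∧ ¬ (p : ℤ_[p]) ^ (B + 1) ∣ cf m) := by
    intro m hm
    have hb1 : (p : ℤ_[p]) ^ B ∣ bf m := Dvd.dvd.mul_right dvd_rfl _
    have hb2 : ¬ (p : ℤ_[p]) ^ (B + 1) ∣ bf m := not_dvd_center hm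
    exact ⟨⟨hb1, hb2⟩, ⟨hb1.mul_left _, not_dvd_unit_mul hUnit hb2⟩⟩
  have hzero : ∀ m : ℕ, (α₁ : ℤ_[p]) * bf m + (α₂ : ℤ_[p]) * cf m = 0 := by
    intro m
    rw [hcfdef]
    have : (α₁ : ℤ_[p]) * bf m + (α₂ : ℤ_[p]) * (-(α₁ : ℤ_[p]) * β * bf m)
        = (α₁ : ℤ_[p]) * bf m * (1 - (α₂ : ℤ_[p]) * β) := by ring
    rw [this, hβ]
    ring
  have hset : eSet p α₁ α₂ α₃ B B F H = ⋃ uw ∈ s, coset p H H (f uw) := by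
    ext bc; obtain ⟨b, c⟩ := bc
    rw [mem_eSet_iff]
    simp only [Set.mem_iUnion, exists_prop, hs, Finset.mem_product, Finset.mem_Ico,
      Finset.mem_range, coset, Set.mem_setOf_eq]
    constructor
    · rintro ⟨⟨hb1, hb2⟩, ⟨hc1, hc2⟩, hlin, hQb⟩
      obtain ⟨m, hm_lt, hm_nd, hm_cong⟩ := exists_unit_digit (show B < H by omega) hb1 hb2
      rw [show H - B = k + 1 by omega] at hm_lt
      have hmm : m % p + p * (m / p) = m := Nat.mod_add_div m p
      refine ⟨(m % p, m / p), ⟨⟨?_, Nat.mod_lt m hp.1.pos⟩, ?_⟩, ?_, ?_⟩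
      · rcases Nat.eq_zero_or_pos (m % p) with h0 | h0
        · exact (hm_nd (Nat.dvd_of_mod_eq_zero h0)).elim
        · exact h0
      · apply Nat.div_lt_of_lt_mul
        calc m < p ^ (k + 1) := hm_lt
        _ = p * p ^ k := by ring
      · show (p : ℤ_[p]) ^ H ∣ b - bf (m % p + p * (m / p))
        rw [hmm]
        exact hm_cong
      · show (p : ℤ_[p]) ^ H ∣ c - cf (m % p + p * (m / p))
        rw [hmm]
        have key : (α₂ : ℤ_[p]) * (c - cf m)
            = ((α₁ : ℤ_[p]) * b + (α₂ : ℤ_[p]) * c) - (α₁ : ℤ_[p]) * (b - bf m)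
              - ((α₁ : ℤ_[p]) * bf m + (α₂ : ℤ_[p]) * cf m) := by ring
        have hdvd : (p : ℤ_[p]) ^ H ∣ (α₂ : ℤ_[p]) * (c - cf m) := by
          rw [key, hzero m, sub_zero]
          exact dvd_sub hlin (hm_cong.mul_left _)
        exact (hα₂u.dvd_mul_left).mp hdvd
    · rintro ⟨⟨u, t⟩, ⟨⟨hu1, hup⟩, ht⟩, hcb, hcc⟩
      have hm_nd : ¬ p ∣ (u + p * t) := m_not_dvd hu1 hup
      obtain ⟨⟨hb1', hb2'⟩, ⟨hc1', hc2'⟩⟩ := hcenter (u + p * t) hm_nd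
      have hcbm : (p : ℤ_[p]) ^ H ∣ b - bf (u + p * t) := hcb
      have hccm : (p : ℤ_[p]) ^ H ∣ c - cf (u + p * t) := hcc
      have hbB : (p : ℤ_[p]) ^ B ∣ b := dvd_of_congr (by omega) hcbm hb1'
      have hcB : (p : ℤ_[p]) ^ B ∣ c := dvd_of_congr (by omega) hccm hc1'
      refine ⟨⟨hbB, not_dvd_of_congr hBH hcbm hb2'⟩,
        ⟨hcB, not_dvd_of_congr hBH hccm hc2'⟩, ?_, ?_⟩
      · have key : (α₁ : ℤ_[p]) * b + (α₂ : ℤ_[p]) * c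
            = (α₁ : ℤ_[p]) * (b - bf (u + p * t)) + (α₂ : ℤ_[p]) * (c - cf (u + p * t))
              + ((α₁ : ℤ_[p]) * bf (u + p * t) + (α₂ : ℤ_[p]) * cf (u + p * t)) := by ring
        rw [key, hzero (u + p * t), add_zero]
        exact dvd_add (hcbm.mul_left _) (hccm.mul_left _)
      · exact auto_F α₁ α₂ α₃ (by omega) hF hbB hcB
  have hdisj : ∀ i ∈ s, ∀ j ∈ s, i ≠ j →
      Disjoint (coset p H H (f i)) (coset p H H (f j)) := by
    rintro ⟨u, t⟩ hi ⟨u', t'⟩ hj hij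
    simp only [hs, Finset.mem_product, Finset.mem_Ico, Finset.mem_range] at hi hj
    apply coset_disjoint
    left
    have hne : u + p * t ≠ u' + p * t' := by
      intro he
      obtain ⟨h1, h2⟩ := m_inj hi.1.2 hj.1.2 he
      exact hij (by rw [h1, h2])
    have := centers_not_congr (B := B) (m_lt hi.1.2 hi.2) (m_lt hj.1.2 hj.2) hne
    rwa [show B + (k + 1) = H by omega] at this
  rw [hset, measure_biUnion_cosets μ hμ s f H H hdisj, hs, Finset.card_product,
    Nat.card_Ico, Finset.card_range]

end Stmt9Aux

namespace Stmt9Aux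
variable {p : ℕ} [hp : Fact p.Prime]

lemma arith (k n : ℕ) :
    (((p - 1) * p ^ k : ℕ) : ℝ≥0∞) * ((p : ℝ≥0∞) ^ n)⁻¹
      = (p : ℝ≥0∞) ^ ((k : ℤ) + 1 - (n : ℤ)) * (1 - (p : ℝ≥0∞)⁻¹) := by
  have hP0 : (p : ℝ≥0∞) ≠ 0 := Nat.cast_ne_zero.mpr hp.1.pos.ne'
  have hPt : (p : ℝ≥0∞) ≠ ⊤ := ENNReal.natCast_ne_top p
  have h1 : (((p - 1) * p ^ k : ℕ) : ℝ≥0∞) = ((p : ℝ≥0∞) - 1) * (p : ℝ≥0∞) ^ k := by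
    rw [Nat.cast_mul, Nat.cast_pow, ENNReal.natCast_sub, Nat.cast_one]
  have h2 : ((p : ℝ≥0∞) - 1) * (p : ℝ≥0∞)⁻¹ = 1 - (p : ℝ≥0∞)⁻¹ := by
    rw [ENNReal.sub_mul (fun _ _ => ENNReal.inv_ne_top.mpr hP0),
      ENNReal.mul_inv_cancel hP0 hPt, one_mul]
  have h3 : (p : ℝ≥0∞) ^ k * ((p : ℝ≥0∞) ^ n)⁻¹
      = (p : ℝ≥0∞) ^ ((k : ℤ) + 1 - (n : ℤ)) * (p : ℝ≥0∞)⁻¹ := by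
    have e1 : ((p : ℝ≥0∞) ^ n)⁻¹ = (p : ℝ≥0∞) ^ (-(n : ℤ)) := by
      rw [ENNReal.zpow_neg, zpow_natCast]
    have e3 : (p : ℝ≥0∞)⁻¹ = (p : ℝ≥0∞) ^ (-1 : ℤ) := by
      rw [ENNReal.zpow_neg, zpow_one]
    rw [e1, e3, show (p : ℝ≥0∞) ^ k = (p : ℝ≥0∞) ^ ((k : ℤ)) from (zpow_natCast _ _).symm,
      ← ENNReal.zpow_add hP0 hPt, ← ENNReal.zpow_add hP0 hPt]
    congr 1
    ring
  rw [h1, mul_assoc, h3, ← mul_assoc, mul_comm ((p : ℝ≥0∞) - 1), mul_assoc, h2]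

lemma arith1 (n : ℕ) :
    (((p - 1) : ℕ) : ℝ≥0∞) * ((p : ℝ≥0∞) ^ n)⁻¹
      = (p : ℝ≥0∞) ^ ((1 : ℤ) - (n : ℤ)) * (1 - (p : ℝ≥0∞)⁻¹) := by
  have := arith (p := p) 0 n
  simpa using this

end Stmt9Aux

/-- Let `p` be a prime with `p ∤ α₁α₂α₃` and, for `B, C ≥ 1` and
`F, H ∈ ℕ`, let `e(B,C,F,H)` be the Haar measure (normalized so that `μ(ℤ_p²) = 1`) of the
set `eSet`. Then: (1) if `F ≤ min{3B, C}` and `H ≤ min{B, C}`, then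
`e(B,C,F,H) = p^{−B−C}(1 − p^{−1})²`; (2) if `F > min{3B, C}` and `3B ≠ C`, or if
`H > min{B, C}` and `B ≠ C`, then `e(B,C,F,H) = 0`; (3) if `F > min{3B, C}`, `3B = C` and
`H ≤ min{B, C}`, then `e(B,3B,F,H) = p^{−F−B}(1 − p^{−1})`; (4) if `H > min{B, C}`, `B = C`
and `F ≤ min{3B, C}`, then `e(B,B,F,H) = p^{−H−B}(1 − p^{−1})`. -/
theorem stmt_9 (p : ℕ) [Fact p.Prime] (α₁ α₂ α₃ : ℤ) (hpα : ¬ (p : ℤ) ∣ α₁ * α₂ * α₃)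
    [MeasurableSpace ℤ_[p]] [BorelSpace ℤ_[p]]
    (μ : Measure (ℤ_[p] × ℤ_[p])) [μ.IsAddHaarMeasure] (hμ : μ Set.univ = 1)
    (B C F H : ℕ) (hB : 1 ≤ B) (hC : 1 ≤ C) :
    (F ≤ min (3 * B) C → H ≤ min B C →
      μ (eSet p α₁ α₂ α₃ B C F H)
        = (p : ℝ≥0∞) ^ (-(B : ℤ) - (C : ℤ)) * (1 - (p : ℝ≥0∞)⁻¹) ^ 2) ∧
    ((min (3 * B) C < F ∧ 3 * B ≠ C) ∨ (min B C < H ∧ B ≠ C) →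
      μ (eSet p α₁ α₂ α₃ B C F H) = 0) ∧
    (min (3 * B) C < F → 3 * B = C → H ≤ min B C →
      μ (eSet p α₁ α₂ α₃ B (3 * B) F H)
        = (p : ℝ≥0∞) ^ (-(F : ℤ) - (B : ℤ)) * (1 - (p : ℝ≥0∞)⁻¹)) ∧
    (min B C < H → B = C → F ≤ min (3 * B) C →
      μ (eSet p α₁ α₂ α₃ B B F H)
        = (p : ℝ≥0∞) ^ (-(H : ℤ) - (B : ℤ)) * (1 - (p : ℝ≥0∞)⁻¹)) := by
  have hp : Fact p.Prime := inferInstance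
  have hα₁ : ¬ (p : ℤ) ∣ α₁ := fun h => hpα ((h.mul_right α₂).mul_right α₃)
  have hα₂ : ¬ (p : ℤ) ∣ α₂ := fun h => hpα ((h.mul_left α₁).mul_right α₃)
  have hP0 : (p : ℝ≥0∞) ≠ 0 := Nat.cast_ne_zero.mpr hp.1.pos.ne'
  have hPt : (p : ℝ≥0∞) ≠ ⊤ := ENNReal.natCast_ne_top p
  refine ⟨?_, ?_, ?_, ?_⟩
  · -- case 1
    intro hF hH
    rw [Stmt9Aux.case1_measure μ hμ α₁ α₂ α₃ (by omega) (by omega) (by omega) (by omega)]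
    have hsplit : ((p : ℝ≥0∞) ^ ((B + 1) + (C + 1)))⁻¹
        = ((p : ℝ≥0∞) ^ (B + 1))⁻¹ * ((p : ℝ≥0∞) ^ (C + 1))⁻¹ := by
      rw [pow_add, ENNReal.mul_inv (Or.inl (pow_ne_zero _ hP0))
        (Or.inl (ENNReal.pow_ne_top hPt))]
    rw [hsplit, Nat.cast_mul, mul_mul_mul_comm, Stmt9Aux.arith1 (B + 1),
      Stmt9Aux.arith1 (C + 1), mul_mul_mul_comm, ← ENNReal.zpow_add hP0 hPt, ← sq]
    congr 1
    congr 1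
    push_cast
    ring
  · -- case 2
    intro h
    rw [Stmt9Aux.case2_empty α₁ α₂ α₃ hα₁ hα₂ hB hC h]
    exact measure_empty
  · -- case 3
    intro hminF h3BC hH
    have hF : 3 * B < F := by omega
    rw [Stmt9Aux.case3_measure μ hμ α₁ α₂ α₃ hB hF (by omega), Stmt9Aux.arith]
    congr 1
    congr 1
    omega
  · -- case 4
    intro hminH hBC hF
    have hH : B < H := by omega
    rw [Stmt9Aux.case4_measure μ hμ α₁ α₂ α₃ hα₁ hα₂ hB hH (by omega), Stmt9Aux.arith]
    congr 1
    congr 1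
    omega
end

section
/- Let α₁, α₂, α₃ ∈ ℤ define the elliptic curve E : Y² + α₃Y = X³ + α₁X² + α₂X over ℚ with discriminant Δ_E ≠ 0, and let p be a prime dividing neither Δ_E nor α₁α₂α₃. Then for every F ≥ 1, μ{(b,c) ∈ ℤ_p² : v(b) = 0, v(c) = 0, v(b³ + α₁b² + α₂b − c² − α₃c) ≥ F} = p^{−F−1} · #{(x,y) ∈ 𝔽_p² : x ≠ 0, y ≠ 0, y² + α₃y = x³ + α₁x² + α₂x}. -/
open MeasureTheory
open scoped ENNReal

/-- The Weierstrass curve `Y² + α₃Y = X³ + α₁X² + α₂X` over `ℤ`. -/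
def Wcurve (α₁ α₂ α₃ : ℤ) : WeierstrassCurve ℤ :=
  { a₁ := 0, a₂ := α₁, a₃ := α₃, a₄ := α₂, a₆ := 0 }

def fpoly (α₁ α₂ α₃ : ℤ) {R : Type*} [CommRing R] (b c : R) : R :=
  b ^ 3 + (α₁ : R) * b ^ 2 + (α₂ : R) * b - c ^ 2 - (α₃ : R) * c

lemma map_fpoly (α₁ α₂ α₃ : ℤ) {R S : Type*} [CommRing R] [CommRing S]
    {F : Type*} [FunLike F R S] [RingHomClass F R S]
    (φ : F) (b c : R) : φ (fpoly α₁ α₂ α₃ b c) = fpoly α₁ α₂ α₃ (φ b) (φ c) := by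
  simp [fpoly, map_sub, map_add, map_mul, map_pow, map_intCast]

/-- number of solutions of a nondegenerate affine-linear equation over 𝔽_p -/
lemma lin_count (p : ℕ) [Fact p.Prime] (A B u : ZMod p) (h : A ≠ 0 ∨ B ≠ 0) :
    Nat.card {st : ZMod p × ZMod p // A * st.1 + B * st.2 = u} = p := by
  rcases h with hA | hB
  · have e : {st : ZMod p × ZMod p // A * st.1 + B * st.2 = u} ≃ ZMod p :=
      { toFun := fun x => x.1.2
        invFun := fun t => ⟨((u - B * t) * A⁻¹, t), by field_simp; ring⟩
        left_inv := by
          rintro ⟨⟨s, t⟩, hst⟩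
          ext
          · have : s = (u - B * t) * A⁻¹ := by
              field_simp
              linear_combination hst
            simp [this.symm]
          · rfl
        right_inv := fun t => rfl }
    rw [Nat.card_congr e, Nat.card_zmod]
  · have e : {st : ZMod p × ZMod p // A * st.1 + B * st.2 = u} ≃ ZMod p :=
      { toFun := fun x => x.1.1
        invFun := fun s => ⟨(s, (u - A * s) * B⁻¹), by field_simp; ring⟩
        left_inv := by
          rintro ⟨⟨s, t⟩, hst⟩
          ext
          · rfl
          · have : t = (u - A * s) * B⁻¹ := by
              field_simp
              linear_combination hst
            simp [this.symm]
        right_inv := fun t => rfl }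
    rw [Nat.card_congr e, Nat.card_zmod]

lemma eps_zero_iff (p : ℕ) [Fact p.Prime] {n : ℕ} (hn : 1 ≤ n) (z : ZMod (p ^ (n + 1))) :
    (p : ZMod (p ^ (n + 1))) ^ n * z = 0 ↔
      ZMod.castHom (dvd_pow_self p (Nat.succ_ne_zero n)) (ZMod p) z = 0 := by
  haveI : NeZero (p ^ (n + 1)) := ⟨pow_ne_zero _ (Fact.out (p := p.Prime)).ne_zero⟩
  have hp : 0 < p := (Fact.out (p := p.Prime)).pos
  obtain ⟨m, hm⟩ : ∃ m : ℕ, z = (m : ZMod (p ^ (n + 1))) := ⟨z.val, (ZMod.natCast_zmod_val z).symm⟩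
  subst hm
  rw [map_natCast, ← Nat.cast_pow, ← Nat.cast_mul, ZMod.natCast_eq_zero_iff,
    ZMod.natCast_eq_zero_iff, pow_succ, mul_comm (p ^ n) p, mul_comm (p ^ n) m]
  exact (Nat.mul_dvd_mul_iff_right (pow_pos hp n))

lemma ker_cast_exists (p : ℕ) [Fact p.Prime] {n : ℕ} (z : ZMod (p ^ (n + 1)))
    (h : ZMod.castHom (pow_dvd_pow p n.le_succ) (ZMod (p ^ n)) z = 0) :
    ∃ m : ℕ, z = (p : ZMod (p ^ (n + 1))) ^ n * (m : ZMod (p ^ (n + 1))) := by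
  haveI : NeZero (p ^ (n + 1)) := ⟨pow_ne_zero _ (Fact.out (p := p.Prime)).ne_zero⟩
  haveI : NeZero (p ^ n) := ⟨pow_ne_zero _ (Fact.out (p := p.Prime)).ne_zero⟩
  have hz : z = ((z.val : ℕ) : ZMod (p ^ (n + 1))) := (ZMod.natCast_zmod_val z).symm
  rw [hz, map_natCast, ZMod.natCast_eq_zero_iff] at h
  obtain ⟨m, hm⟩ := h
  exact ⟨m, by rw [hz, hm]; push_cast; ring⟩

lemma nonsing (α₁ α₂ α₃ : ℤ) (p : ℕ) [Fact p.Prime]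
    (hpΔ : ¬ (p : ℤ) ∣ (Wcurve α₁ α₂ α₃).Δ) (x y : ZMod p)
    (hxy : fpoly α₁ α₂ α₃ x y = 0) :
    (3 * x ^ 2 + 2 * (α₁ : ZMod p) * x + α₂ ≠ 0) ∨ (2 * y + (α₃ : ZMod p) ≠ 0) := by
  let W : WeierstrassCurve.Affine (ZMod p) := (Wcurve α₁ α₂ α₃).map (Int.castRingHom (ZMod p))
  have ha1 : W.a₁ = 0 := by simp [W, Wcurve, WeierstrassCurve.map]
  have ha2 : W.a₂ = (α₁ : ZMod p) := by simp [W, Wcurve, WeierstrassCurve.map]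
  have ha3 : W.a₃ = (α₃ : ZMod p) := by simp [W, Wcurve, WeierstrassCurve.map]
  have ha4 : W.a₄ = (α₂ : ZMod p) := by simp [W, Wcurve, WeierstrassCurve.map]
  have ha6 : W.a₆ = 0 := by simp [W, Wcurve, WeierstrassCurve.map]
  have hΔ : W.Δ ≠ 0 := by
    have : W.Δ = ((Wcurve α₁ α₂ α₃).Δ : ZMod p) := by
      rw [show W.Δ = ((Wcurve α₁ α₂ α₃).map (Int.castRingHom (ZMod p))).Δ from rfl,
        WeierstrassCurve.map_Δ]; rfl
    rw [this]
    simpa [ZMod.intCast_zmod_eq_zero_iff_dvd] using hpΔ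
  have heq : W.Equation x y := by
    rw [WeierstrassCurve.Affine.equation_iff, ha1, ha2, ha3, ha4, ha6]
    simp only [fpoly] at hxy
    linear_combination -hxy
  have := (WeierstrassCurve.Affine.equation_iff_nonsingular_of_Δ_ne_zero (W := W) hΔ).mp heq
  rw [WeierstrassCurve.Affine.nonsingular_iff', ha1, ha2, ha3, ha4] at this
  rcases this.2 with h | h
  · left
    intro hc; exact h (by rw [zero_mul, sub_eq_zero]; linear_combination -hc)
  · right
    intro hc; exact h (by linear_combination hc)

lemma fiber_count (α₁ α₂ α₃ : ℤ) (p : ℕ) [Fact p.Prime]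
    (hpΔ : ¬ (p : ℤ) ∣ (Wcurve α₁ α₂ α₃).Δ) (k : ℕ) (b c : ZMod (p ^ (k + 1)))
    (hb : ZMod.castHom (dvd_pow_self p (Nat.succ_ne_zero k)) (ZMod p) b ≠ 0)
    (hc : ZMod.castHom (dvd_pow_self p (Nat.succ_ne_zero k)) (ZMod p) c ≠ 0)
    (hf : fpoly α₁ α₂ α₃ b c = 0) :
    Nat.card {x : ZMod (p ^ (k + 1 + 1)) × ZMod (p ^ (k + 1 + 1)) //
      (ZMod.castHom (dvd_pow_self p (Nat.succ_ne_zero (k + 1))) (ZMod p) x.1 ≠ 0 ∧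
       ZMod.castHom (dvd_pow_self p (Nat.succ_ne_zero (k + 1))) (ZMod p) x.2 ≠ 0 ∧
       fpoly α₁ α₂ α₃ x.1 x.2 = 0) ∧
      ZMod.castHom (pow_dvd_pow p (k + 1).le_succ) (ZMod (p ^ (k + 1))) x.1 = b ∧
      ZMod.castHom (pow_dvd_pow p (k + 1).le_succ) (ZMod (p ^ (k + 1))) x.2 = c} = p := by
  have hppos : 0 < p := (Fact.out (p := p.Prime)).pos
  haveI : NeZero (p ^ (k + 1)) := ⟨pow_ne_zero _ hppos.ne'⟩
  haveI : NeZero (p ^ (k + 1 + 1)) := ⟨pow_ne_zero _ hppos.ne'⟩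
  set R1 := ZMod (p ^ (k + 1 + 1)) with hR1
  set π : R1 →+* ZMod (p ^ (k + 1)) :=
    ZMod.castHom (pow_dvd_pow p (k + 1).le_succ) (ZMod (p ^ (k + 1))) with hπ
  set ρ : R1 →+* ZMod p :=
    ZMod.castHom (dvd_pow_self p (Nat.succ_ne_zero (k + 1))) (ZMod p) with hρ
  set ρ0 : ZMod (p ^ (k + 1)) →+* ZMod p :=
    ZMod.castHom (dvd_pow_self p (Nat.succ_ne_zero k)) (ZMod p) with hρ0
  have hcomp : ∀ z : R1, ρ0 (π z) = ρ z := fun z =>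
    RingHom.congr_fun (RingHom.ext_zmod (ρ0.comp π) ρ) z
  -- epsilon facts
  set ε : R1 := (p : R1) ^ (k + 1) with hεdef
  have hpn1 : ((p : R1)) ^ (k + 1 + 1) = 0 := by
    rw [← Nat.cast_pow, ZMod.natCast_self]
  have hε2 : ε * ε = 0 := by
    have h2 : ε * ε = (p : R1) ^ (k + 1 + 1) * (p : R1) ^ k := by
      rw [hεdef, ← pow_add, ← pow_add]; congr 1; omega
    rw [h2, hpn1, zero_mul]
  have hρε : ρ ε = 0 := by
    rw [hεdef, map_pow, map_natCast, ZMod.natCast_self, zero_pow (Nat.succ_ne_zero k)]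
  have hπε : π ε = 0 := by
    rw [hεdef, map_pow, map_natCast, ← Nat.cast_pow, ZMod.natCast_self]
  -- lifts
  set b₀ : R1 := ((b.val : ℕ) : R1) with hb₀
  set c₀ : R1 := ((c.val : ℕ) : R1) with hc₀
  have hπb : π b₀ = b := by rw [hb₀, map_natCast, ZMod.natCast_zmod_val]
  have hπc : π c₀ = c := by rw [hc₀, map_natCast, ZMod.natCast_zmod_val]
  have hρb₀ : ρ b₀ = ρ0 b := by rw [← hcomp, hπb]
  have hρc₀ : ρ c₀ = ρ0 c := by rw [← hcomp, hπc]
  have hfz : π (fpoly α₁ α₂ α₃ b₀ c₀) = 0 := by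
    rw [map_fpoly, hπb, hπc, hf]
  obtain ⟨u, hu⟩ := ker_cast_exists p (fpoly α₁ α₂ α₃ b₀ c₀) hfz
  -- partial derivatives
  set A : R1 := 3 * b₀ ^ 2 + 2 * (α₁ : R1) * b₀ + (α₂ : R1) with hA
  set B : R1 := -(2 * c₀ + (α₃ : R1)) with hB
  have key : ∀ s t : R1, fpoly α₁ α₂ α₃ (b₀ + ε * s) (c₀ + ε * t)
      = fpoly α₁ α₂ α₃ b₀ c₀ + ε * (s * A + t * B) := by
    intro s t
    have h3 : ε * ε * (s ^ 3 * ε + 3 * b₀ * s ^ 2 + (α₁ : R1) * s ^ 2 - t ^ 2) = 0 := by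
      rw [hε2, zero_mul]
    simp only [fpoly, hA, hB]
    linear_combination h3
  have hliftρ : ∀ s : ZMod p, ρ ((s.val : ℕ) : R1) = s := fun s => by
    rw [map_natCast, ZMod.natCast_zmod_val]
  have hεz : ∀ z : R1, ε * z = 0 ↔ ρ z = 0 := fun z =>
    eps_zero_iff p (Nat.one_le_iff_ne_zero.mpr (Nat.succ_ne_zero k)) z
  -- nonsingularity of the reduction
  have hfxy : fpoly α₁ α₂ α₃ (ρ0 b) (ρ0 c) = 0 := by
    rw [← map_fpoly, hf, map_zero]
  have hρA : ρ A = 3 * (ρ0 b) ^ 2 + 2 * (α₁ : ZMod p) * (ρ0 b) + (α₂ : ZMod p) := by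
    rw [hA, map_add, map_add, map_mul, map_mul, map_mul, map_pow, map_intCast, map_intCast,
      map_ofNat, map_ofNat, hρb₀]
  have hρB : ρ B = -(2 * (ρ0 c) + (α₃ : ZMod p)) := by
    rw [hB, map_neg, map_add, map_mul, map_intCast, map_ofNat, hρc₀]
  have hAB : ρ A ≠ 0 ∨ ρ B ≠ 0 := by
    rcases nonsing α₁ α₂ α₃ p hpΔ (ρ0 b) (ρ0 c) hfxy with h | h
    · left; rw [hρA]; exact h
    · right; rw [hρB]; exact neg_ne_zero.mpr h
  -- the solution set of the linearization
  have hfθ : ∀ (s t : ZMod p), ρ A * s + ρ B * t = -(u : ZMod p) →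
      fpoly α₁ α₂ α₃ (b₀ + ε * ((s.val : ℕ) : R1)) (c₀ + ε * ((t.val : ℕ) : R1)) = 0 := by
    intro s t hst
    rw [key, hu, ← hεdef, show ε * (u : R1) + ε * (((s.val : ℕ) : R1) * A + ((t.val : ℕ) : R1) * B)
      = ε * ((u : R1) + (((s.val : ℕ) : R1) * A + ((t.val : ℕ) : R1) * B)) by ring, hεz]
    rw [map_add, map_add, map_mul, map_mul, map_natCast, hliftρ, hliftρ]
    linear_combination hst
  have hfθ' : ∀ (s t : ZMod p),
      fpoly α₁ α₂ α₃ (b₀ + ε * ((s.val : ℕ) : R1)) (c₀ + ε * ((t.val : ℕ) : R1)) = 0 →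
      ρ A * s + ρ B * t = -(u : ZMod p) := by
    intro s t hst
    rw [key, hu, ← hεdef, show ε * (u : R1) + ε * (((s.val : ℕ) : R1) * A + ((t.val : ℕ) : R1) * B)
      = ε * ((u : R1) + (((s.val : ℕ) : R1) * A + ((t.val : ℕ) : R1) * B)) by ring, hεz] at hst
    rw [map_add, map_add, map_mul, map_mul, map_natCast, hliftρ, hliftρ] at hst
    linear_combination hst
  -- injectivity helper
  have hinj : ∀ s s' : ZMod p, ε * ((s.val : ℕ) : R1) = ε * ((s'.val : ℕ) : R1) → s = s' := by
    intro s s' h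
    have h0 : ε * (((s.val : ℕ) : R1) - ((s'.val : ℕ) : R1)) = 0 := by
      rw [mul_sub, h, sub_self]
    rw [hεz, map_sub, hliftρ, hliftρ, sub_eq_zero] at h0
    exact h0
  -- the bijection
  let θ : {st : ZMod p × ZMod p // ρ A * st.1 + ρ B * st.2 = -(u : ZMod p)} →
      {x : R1 × R1 // (ρ x.1 ≠ 0 ∧ ρ x.2 ≠ 0 ∧ fpoly α₁ α₂ α₃ x.1 x.2 = 0) ∧
        π x.1 = b ∧ π x.2 = c} := fun st =>
    ⟨(b₀ + ε * ((st.1.1.val : ℕ) : R1), c₀ + ε * ((st.1.2.val : ℕ) : R1)), by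
      obtain ⟨⟨s, t⟩, hst⟩ := st
      refine ⟨⟨?_, ?_, hfθ s t hst⟩, ?_, ?_⟩
      · show ρ _ ≠ 0
        rw [map_add, map_mul, hρε, zero_mul, add_zero, hρb₀]
        exact hb
      · show ρ _ ≠ 0
        rw [map_add, map_mul, hρε, zero_mul, add_zero, hρc₀]
        exact hc
      · rw [map_add, map_mul, hπε, zero_mul, add_zero, hπb]
      · rw [map_add, map_mul, hπε, zero_mul, add_zero, hπc]⟩
  have hθbij : Function.Bijective θ := by
    constructor
    · rintro ⟨⟨s, t⟩, h1⟩ ⟨⟨s', t'⟩, h2⟩ h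
      have h' := congrArg (fun z => z.1) h
      simp only [θ, Prod.mk.injEq] at h'
      obtain ⟨ha, hb'⟩ := h'
      have hs : s = s' := hinj s s' (by rwa [add_right_inj] at ha)
      have ht : t = t' := hinj t t' (by rwa [add_right_inj] at hb')
      exact Subtype.ext (Prod.ext hs ht)
    · rintro ⟨⟨b', c'⟩, ⟨h1, h2, h3⟩, h4, h5⟩
      have hπb' : π (b' - b₀) = 0 := by rw [map_sub, h4, hπb, sub_self]
      have hπc' : π (c' - c₀) = 0 := by rw [map_sub, h5, hπc, sub_self]
      obtain ⟨m, hm⟩ := ker_cast_exists p (b' - b₀) hπb'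
      obtain ⟨m', hm'⟩ := ker_cast_exists p (c' - c₀) hπc'
      set s : ZMod p := (m : ZMod p) with hs
      set t : ZMod p := (m' : ZMod p) with ht
      have hεm : ε * ((m : ℕ) : R1) = ε * ((s.val : ℕ) : R1) := by
        have h0 : ε * (((m : ℕ) : R1) - ((s.val : ℕ) : R1)) = 0 := by
          rw [hεz, map_sub, map_natCast, hliftρ, hs, sub_self]
        rw [mul_sub, sub_eq_zero] at h0
        exact h0
      have hεm' : ε * ((m' : ℕ) : R1) = ε * ((t.val : ℕ) : R1) := by
        have h0 : ε * (((m' : ℕ) : R1) - ((t.val : ℕ) : R1)) = 0 := by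
          rw [hεz, map_sub, map_natCast, hliftρ, ht, sub_self]
        rw [mul_sub, sub_eq_zero] at h0
        exact h0
      have hbb : b' = b₀ + ε * ((s.val : ℕ) : R1) := by
        rw [← hεm, hεdef]; linear_combination hm
      have hcc : c' = c₀ + ε * ((t.val : ℕ) : R1) := by
        rw [← hεm', hεdef]; linear_combination hm'
      have hsol : ρ A * s + ρ B * t = -(u : ZMod p) := by
        apply hfθ' s t
        rw [← hbb, ← hcc]
        exact h3
      exact ⟨⟨(s, t), hsol⟩, by
        apply Subtype.ext
        exact Prod.ext hbb.symm hcc.symm⟩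
  calc Nat.card {x : R1 × R1 // (ρ x.1 ≠ 0 ∧ ρ x.2 ≠ 0 ∧ fpoly α₁ α₂ α₃ x.1 x.2 = 0) ∧
        π x.1 = b ∧ π x.2 = c}
      = Nat.card {st : ZMod p × ZMod p // ρ A * st.1 + ρ B * st.2 = -(u : ZMod p)} :=
        (Nat.card_congr (Equiv.ofBijective θ hθbij)).symm
    _ = p := lin_count p (ρ A) (ρ B) (-(u : ZMod p)) hAB

/-- The number of admissible approximate solutions mod `p^(k+1)`. -/
noncomputable def Tcard (α₁ α₂ α₃ : ℤ) (p : ℕ) [Fact p.Prime] (k : ℕ) : ℕ :=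
  Nat.card {x : ZMod (p ^ (k + 1)) × ZMod (p ^ (k + 1)) //
    ZMod.castHom (dvd_pow_self p (Nat.succ_ne_zero k)) (ZMod p) x.1 ≠ 0 ∧
    ZMod.castHom (dvd_pow_self p (Nat.succ_ne_zero k)) (ZMod p) x.2 ≠ 0 ∧
    fpoly α₁ α₂ α₃ x.1 x.2 = 0}

lemma Tcard_step (α₁ α₂ α₃ : ℤ) (p : ℕ) [Fact p.Prime]
    (hpΔ : ¬ (p : ℤ) ∣ (Wcurve α₁ α₂ α₃).Δ) (k : ℕ) :
    Tcard α₁ α₂ α₃ p (k + 1) = p * Tcard α₁ α₂ α₃ p k := by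
  classical
  have hppos : 0 < p := (Fact.out (p := p.Prime)).pos
  haveI : NeZero (p ^ (k + 1)) := ⟨pow_ne_zero _ hppos.ne'⟩
  haveI : NeZero (p ^ (k + 1 + 1)) := ⟨pow_ne_zero _ hppos.ne'⟩
  set R1 := ZMod (p ^ (k + 1 + 1))
  set R0 := ZMod (p ^ (k + 1))
  set π : R1 →+* R0 := ZMod.castHom (pow_dvd_pow p (k + 1).le_succ) R0 with hπ
  set ρ1 : R1 →+* ZMod p := ZMod.castHom (dvd_pow_self p (Nat.succ_ne_zero (k + 1))) (ZMod p)
    with hρ1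
  set ρ0 : R0 →+* ZMod p := ZMod.castHom (dvd_pow_self p (Nat.succ_ne_zero k)) (ZMod p) with hρ0
  set P1 : R1 × R1 → Prop := fun x => ρ1 x.1 ≠ 0 ∧ ρ1 x.2 ≠ 0 ∧ fpoly α₁ α₂ α₃ x.1 x.2 = 0
    with hP1
  set P0 : R0 × R0 → Prop := fun x => ρ0 x.1 ≠ 0 ∧ ρ0 x.2 ≠ 0 ∧ fpoly α₁ α₂ α₃ x.1 x.2 = 0
    with hP0
  set g : R1 × R1 → R0 × R0 := fun x => (π x.1, π x.2) with hg
  have hcomp : ∀ z : R1, ρ0 (π z) = ρ1 z := fun z =>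
    RingHom.congr_fun (RingHom.ext_zmod (ρ0.comp π) ρ1) z
  have hmap : ∀ x ∈ Finset.univ.filter P1, g x ∈ Finset.univ.filter P0 := by
    intro x hx
    rw [Finset.mem_filter] at hx ⊢
    obtain ⟨-, h1, h2, h3⟩ := hx
    refine ⟨Finset.mem_univ _, ?_, ?_, ?_⟩
    · rw [hg]; simpa [hcomp] using h1
    · rw [hg]; simpa [hcomp] using h2
    · rw [hg]; simp only []
      rw [← map_fpoly, h3, map_zero]
  have hT1 : Tcard α₁ α₂ α₃ p (k + 1) = (Finset.univ.filter P1).card := by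
    rw [Tcard, Nat.card_eq_fintype_card, Fintype.card_subtype]
  have hT0 : Tcard α₁ α₂ α₃ p k = (Finset.univ.filter P0).card := by
    rw [Tcard, Nat.card_eq_fintype_card, Fintype.card_subtype]
  rw [hT1, hT0, Finset.card_eq_sum_card_fiberwise hmap]
  have hfib : ∀ y ∈ Finset.univ.filter P0,
      ((Finset.univ.filter P1).filter fun x => g x = y).card = p := by
    rintro ⟨b, c⟩ hy
    rw [Finset.mem_filter] at hy
    obtain ⟨-, h1, h2, h3⟩ := hy
    rw [Finset.filter_filter]
    have : ((Finset.univ.filter fun x => P1 x ∧ g x = (b, c))).card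
        = Nat.card {x : R1 × R1 // P1 x ∧ g x = (b, c)} := by
      rw [Nat.card_eq_fintype_card, Fintype.card_subtype]
    rw [this]
    have e : {x : R1 × R1 // P1 x ∧ g x = (b, c)} ≃
        {x : R1 × R1 // P1 x ∧ (π x.1 = b ∧ π x.2 = c)} :=
      Equiv.subtypeEquivRight (fun x => by
        rw [hg]
        constructor
        · rintro ⟨hp, hgx⟩
          exact ⟨hp, congrArg Prod.fst hgx, congrArg Prod.snd hgx⟩
        · rintro ⟨hp, hb, hc⟩
          exact ⟨hp, Prod.ext hb hc⟩)
    rw [Nat.card_congr e]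
    exact fiber_count α₁ α₂ α₃ p hpΔ k b c h1 h2 h3
  rw [Finset.sum_congr rfl hfib, Finset.sum_const, smul_eq_mul, mul_comm]

lemma Tcard_total (α₁ α₂ α₃ : ℤ) (p : ℕ) [Fact p.Prime]
    (hpΔ : ¬ (p : ℤ) ∣ (Wcurve α₁ α₂ α₃).Δ) (k : ℕ) :
    Tcard α₁ α₂ α₃ p k = p ^ k * Tcard α₁ α₂ α₃ p 0 := by
  induction k with
  | zero => simp
  | succ n ih => rw [Tcard_step α₁ α₂ α₃ p hpΔ n, ih, pow_succ]; ring

lemma Tcard_zero (α₁ α₂ α₃ : ℤ) (p : ℕ) [Fact p.Prime] :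
    Tcard α₁ α₂ α₃ p 0 = Nat.card {xy : ZMod p × ZMod p //
      xy.1 ≠ 0 ∧ xy.2 ≠ 0 ∧
      xy.2 ^ 2 + (α₃ : ZMod p) * xy.2
        = xy.1 ^ 3 + (α₁ : ZMod p) * xy.1 ^ 2 + (α₂ : ZMod p) * xy.1} := by
  set e : ZMod (p ^ 1) ≃+* ZMod p := ZMod.ringEquivCongr (pow_one p) with he
  have hρ : ∀ z : ZMod (p ^ 1),
      ZMod.castHom (dvd_pow_self p (Nat.succ_ne_zero 0)) (ZMod p) z = e z := fun z =>
    RingHom.congr_fun (RingHom.ext_zmod _ (e : ZMod (p ^ 1) →+* ZMod p)) z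
  refine Nat.card_congr (Equiv.subtypeEquiv (Equiv.prodCongr e.toEquiv e.toEquiv) ?_)
  rintro ⟨a, b⟩
  simp only [Equiv.prodCongr_apply, Prod.map, RingEquiv.toEquiv_eq_coe, EquivLike.coe_coe]
  rw [hρ, hρ]
  constructor
  · rintro ⟨h1, h2, h3⟩
    refine ⟨h1, h2, ?_⟩
    have := congrArg e h3
    rw [map_fpoly, map_zero] at this
    simp only [fpoly] at this
    linear_combination -this
  · rintro ⟨h1, h2, h3⟩
    refine ⟨h1, h2, ?_⟩
    have : e (fpoly α₁ α₂ α₃ a b) = 0 := by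
      rw [map_fpoly]
      simp only [fpoly]
      linear_combination -h3
    exact e.injective (by rw [this, map_zero])

/-- Let `α₁, α₂, α₃ ∈ ℤ` define the elliptic curve
`E : Y² + α₃Y = X³ + α₁X² + α₂X` over `ℚ` with discriminant `Δ_E ≠ 0`, and let `p` be a
prime dividing neither `Δ_E` nor `α₁α₂α₃`. Then for every `F ≥ 1`, the normalized Haar
measure of `{(b,c) ∈ ℤ_p² : v(b) = 0, v(c) = 0, v(b³ + α₁b² + α₂b − c² − α₃c) ≥ F}` equals
`p^{−F−1}` times the number of points `(x,y) ∈ 𝔽_p²` with `x ≠ 0`, `y ≠ 0` on the reduction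
of `E` modulo `p`. -/
theorem stmt_10 (α₁ α₂ α₃ : ℤ) (hΔ : (Wcurve α₁ α₂ α₃).Δ ≠ 0)
    (p : ℕ) [Fact p.Prime] (hpΔ : ¬ (p : ℤ) ∣ (Wcurve α₁ α₂ α₃).Δ)
    (hpα : ¬ (p : ℤ) ∣ α₁ * α₂ * α₃)
    [MeasurableSpace ℤ_[p]] [BorelSpace ℤ_[p]]
    (μ : Measure (ℤ_[p] × ℤ_[p])) [μ.IsAddHaarMeasure] (hμ : μ Set.univ = 1)
    (F : ℕ) (hF : 1 ≤ F) :
    μ {bc : ℤ_[p] × ℤ_[p] |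
        ¬ (p : ℤ_[p]) ∣ bc.1 ∧ ¬ (p : ℤ_[p]) ∣ bc.2 ∧
        (p : ℤ_[p]) ^ F ∣
          (bc.1 ^ 3 + (α₁ : ℤ_[p]) * bc.1 ^ 2 + (α₂ : ℤ_[p]) * bc.1
            - bc.2 ^ 2 - (α₃ : ℤ_[p]) * bc.2)}
      = (p : ℝ≥0∞) ^ (-(F : ℤ) - 1) *
        (Nat.card {xy : ZMod p × ZMod p //
          xy.1 ≠ 0 ∧ xy.2 ≠ 0 ∧
          xy.2 ^ 2 + (α₃ : ZMod p) * xy.2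
            = xy.1 ^ 3 + (α₁ : ZMod p) * xy.1 ^ 2 + (α₂ : ZMod p) * xy.1} : ℝ≥0∞) := by
  classical
  obtain ⟨k, rfl⟩ : ∃ k, F = k + 1 := ⟨F - 1, by omega⟩
  have hppos : 0 < p := (Fact.out (p := p.Prime)).pos
  have hp1 : (1:ℕ) < p := (Fact.out (p := p.Prime)).one_lt
  haveI : NeZero (p ^ (k + 1)) := ⟨pow_ne_zero _ hppos.ne'⟩
  set R := ZMod (p ^ (k + 1)) with hR
  set τ : ℤ_[p] →+* R := PadicInt.toZModPow (k + 1) with hτ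
  set ρ : R →+* ZMod p := ZMod.castHom (dvd_pow_self p (Nat.succ_ne_zero k)) (ZMod p) with hρ
  set φ : ℤ_[p] × ℤ_[p] → R × R := fun z => (τ z.1, τ z.2) with hφ
  set cond : R × R → Prop := fun t => ρ t.1 ≠ 0 ∧ ρ t.2 ≠ 0 ∧ fpoly α₁ α₂ α₃ t.1 t.2 = 0
    with hcond
  -- divisibility tests
  have hdvdF : ∀ z : ℤ_[p], ((p : ℤ_[p]) ^ (k + 1) ∣ z ↔ τ z = 0) := by
    intro z
    rw [hτ, ← RingHom.mem_ker, PadicInt.ker_toZModPow, Ideal.mem_span_singleton]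
  have hdvd1 : ∀ z : ℤ_[p], ((p : ℤ_[p]) ∣ z ↔ ρ (τ z) = 0) := by
    intro z
    have h1 : (p : ℤ_[p]) ∣ z ↔ PadicInt.toZModPow 1 z = 0 := by
      rw [← RingHom.mem_ker, PadicInt.ker_toZModPow, Ideal.mem_span_singleton, pow_one]
    set e : ZMod (p ^ 1) ≃+* ZMod p := ZMod.ringEquivCongr (pow_one p) with he
    have hcomp : ρ = (e : ZMod (p ^ 1) →+* ZMod p).comp
        (ZMod.castHom (pow_dvd_pow p (by omega : 1 ≤ k + 1)) (ZMod (p ^ 1))) :=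
      RingHom.ext_zmod _ _
    have hcast : ZMod.castHom (pow_dvd_pow p (by omega : 1 ≤ k + 1)) (ZMod (p ^ 1)) (τ z)
        = PadicInt.toZModPow 1 z :=
      RingHom.congr_fun (PadicInt.zmod_cast_comp_toZModPow 1 (k + 1) (by omega)) z
    rw [h1, hcomp, RingHom.comp_apply, hcast]
    exact ⟨fun h => by rw [h, map_zero], fun h => by
      simpa using congrArg e.symm h⟩
  -- identification of the set
  have hset : {bc : ℤ_[p] × ℤ_[p] |
        ¬ (p : ℤ_[p]) ∣ bc.1 ∧ ¬ (p : ℤ_[p]) ∣ bc.2 ∧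
        (p : ℤ_[p]) ^ (k + 1) ∣
          (bc.1 ^ 3 + (α₁ : ℤ_[p]) * bc.1 ^ 2 + (α₂ : ℤ_[p]) * bc.1
            - bc.2 ^ 2 - (α₃ : ℤ_[p]) * bc.2)}
      = φ ⁻¹' {t | cond t} := by
    ext z
    simp only [Set.mem_setOf_eq, Set.mem_preimage, hcond, hφ]
    rw [hdvd1, hdvd1, show z.1 ^ 3 + (α₁ : ℤ_[p]) * z.1 ^ 2 + (α₂ : ℤ_[p]) * z.1
          - z.2 ^ 2 - (α₃ : ℤ_[p]) * z.2 = fpoly α₁ α₂ α₃ z.1 z.2 from rfl,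
      hdvdF, map_fpoly]
  -- the basic cell and its measure
  set K : Set ℤ_[p] := {z | (p : ℤ_[p]) ^ (k + 1) ∣ z} with hK
  have hKmeas : MeasurableSet K := by
    have : K = {z : ℤ_[p] | ‖z‖ ≤ (p : ℝ) ^ (-((k+1:ℕ) : ℤ))} := by
      ext z
      rw [hK, Set.mem_setOf_eq, Set.mem_setOf_eq, PadicInt.norm_le_pow_iff_mem_span_pow,
        Ideal.mem_span_singleton]
    rw [this]
    exact (isClosed_le continuous_norm continuous_const).measurableSet
  have hτsurj : Function.Surjective τ := fun t =>
    ⟨((t.val : ℕ) : ℤ_[p]), by rw [hτ, map_natCast, ZMod.natCast_zmod_val]⟩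
  have hsub : ∀ w w' : ℤ_[p], (τ w = τ w' ↔ w - w' ∈ K) := by
    intro w w'
    rw [hK, Set.mem_setOf_eq, hdvdF, map_sub, sub_eq_zero]
  have hfiber : ∀ t : R × R, ∃ a : ℤ_[p] × ℤ_[p],
      φ ⁻¹' {t} = (fun z => z + a) ⁻¹' (K ×ˢ K) := by
    rintro ⟨t₁, t₂⟩
    obtain ⟨a₁, ha₁⟩ := hτsurj t₁
    obtain ⟨a₂, ha₂⟩ := hτsurj t₂
    refine ⟨(-a₁, -a₂), ?_⟩
    ext z
    simp only [Set.mem_preimage, Set.mem_singleton_iff, Set.mem_prod, hφ, Prod.mk.injEq,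
      Prod.fst_add, Prod.snd_add]
    rw [show z.1 + (-a₁, -a₂).1 = z.1 - a₁ from (sub_eq_add_neg z.1 a₁).symm,
      show z.2 + (-a₁, -a₂).2 = z.2 - a₂ from (sub_eq_add_neg z.2 a₂).symm,
      ← hsub, ← hsub, ha₁, ha₂]
  have hfibmeas : ∀ t : R × R, MeasurableSet (φ ⁻¹' {t}) := by
    intro t
    obtain ⟨a, ha⟩ := hfiber t
    rw [ha]
    exact (measurable_add_const a) (hKmeas.prod hKmeas)
  have hfibmeasure : ∀ t : R × R, μ (φ ⁻¹' {t}) = μ (K ×ˢ K) := by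
    intro t
    obtain ⟨a, ha⟩ := hfiber t
    rw [ha, measure_preimage_add_right]
  -- total measure computation
  have hcardR : Fintype.card (R × R) = p ^ (2 * (k + 1)) := by
    rw [Fintype.card_prod, show Fintype.card R = p ^ (k + 1) from ZMod.card _, ← pow_add, two_mul]
  have hμK : μ (K ×ˢ K) = ((p : ℝ≥0∞) ^ (2 * (k + 1)))⁻¹ := by
    have huniv : (Set.univ : Set (ℤ_[p] × ℤ_[p])) = ⋃ t : R × R, φ ⁻¹' {t} := by
      ext z
      simp only [Set.mem_univ, Set.mem_iUnion, Set.mem_preimage, Set.mem_singleton_iff, true_iff]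
      exact ⟨φ z, rfl⟩
    have hdisj : Pairwise (Function.onFun Disjoint fun t : R × R => φ ⁻¹' {t}) := by
      intro t t' hne
      exact Set.disjoint_left.mpr fun z h1 h2 => hne (h1.symm.trans h2)
    have h1 : (1 : ℝ≥0∞) = ∑' t : R × R, μ (φ ⁻¹' {t}) := by
      rw [← measure_iUnion hdisj hfibmeas, ← huniv, hμ]
    rw [tsum_congr hfibmeasure, tsum_eq_sum (s := Finset.univ)
      (fun t ht => absurd (Finset.mem_univ t) ht), Finset.sum_const, nsmul_eq_mul] at h1
    have hcne : (((Finset.univ (α := R × R)).card : ℝ≥0∞)) = (p : ℝ≥0∞) ^ (2 * (k + 1)) := by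
      rw [Finset.card_univ, hcardR]
      push_cast
      ring
    rw [hcne] at h1
    exact ENNReal.eq_inv_of_mul_eq_one_left (by rw [mul_comm] at h1; exact h1.symm)
  -- measure of the set
  have hSmeasure : μ (φ ⁻¹' {t | cond t})
      = (Tcard α₁ α₂ α₃ p k : ℝ≥0∞) * ((p : ℝ≥0∞) ^ (2 * (k + 1)))⁻¹ := by
    have hdecomp : φ ⁻¹' {t | cond t} = ⋃ t ∈ Finset.univ.filter cond, φ ⁻¹' {t} := by
      ext z
      simp only [Set.mem_preimage, Set.mem_setOf_eq, Set.mem_iUnion, Finset.mem_filter,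
        Finset.mem_univ, true_and, Set.mem_singleton_iff]
      exact ⟨fun h => ⟨φ z, h, rfl⟩, fun ⟨t, ht, hzt⟩ => by rw [hzt]; exact ht⟩
    rw [hdecomp, measure_biUnion_finset ?_ (fun t _ => hfibmeas t)]
    · rw [Finset.sum_congr rfl (fun t _ => (hfibmeasure t).trans (hμK)), Finset.sum_const,
        nsmul_eq_mul]
      congr 1
      rw [Tcard, Nat.card_eq_fintype_card, Fintype.card_subtype]
    · intro t _ t' _ hne
      exact Set.disjoint_left.mpr fun z h1 h2 => hne (h1.symm.trans h2)
  rw [hset, hSmeasure, Tcard_total α₁ α₂ α₃ p hpΔ k, Tcard_zero α₁ α₂ α₃ p]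
  -- final arithmetic
  set N : ℕ := Nat.card {xy : ZMod p × ZMod p //
    xy.1 ≠ 0 ∧ xy.2 ≠ 0 ∧
    xy.2 ^ 2 + (α₃ : ZMod p) * xy.2
      = xy.1 ^ 3 + (α₁ : ZMod p) * xy.1 ^ 2 + (α₂ : ZMod p) * xy.1} with hN
  have hpne0 : (p : ℝ≥0∞) ≠ 0 := by
    simp [hppos.ne']
  have hpnetop : (p : ℝ≥0∞) ≠ ⊤ := ENNReal.natCast_ne_top p
  have hzpow : (p : ℝ≥0∞) ^ (-((k+1 : ℕ) : ℤ) - 1) = ((p : ℝ≥0∞) ^ (k + 2))⁻¹ := by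
    rw [show (-((k+1 : ℕ) : ℤ) - 1) = -((k + 2 : ℕ) : ℤ) by push_cast; ring,
      ENNReal.zpow_neg, zpow_natCast]
  rw [hzpow]
  have hsplit : ((p : ℝ≥0∞) ^ (2 * (k + 1)))⁻¹ = ((p : ℝ≥0∞) ^ k)⁻¹ * ((p : ℝ≥0∞) ^ (k + 2))⁻¹ := by
    rw [← ENNReal.mul_inv (Or.inl (pow_ne_zero _ hpne0)) (Or.inl (ENNReal.pow_ne_top hpnetop)),
      ← pow_add]
    congr 1
    ring
  rw [hsplit]
  push_cast
  rw [show ((p : ℝ≥0∞) ^ k * (N : ℝ≥0∞)) * (((p : ℝ≥0∞) ^ k)⁻¹ * ((p : ℝ≥0∞) ^ (k + 2))⁻¹)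
    = ((p : ℝ≥0∞) ^ k * ((p : ℝ≥0∞) ^ k)⁻¹) * (((p : ℝ≥0∞) ^ (k + 2))⁻¹ * N) by ring,
    ENNReal.mul_inv_cancel (pow_ne_zero _ hpne0) (ENNReal.pow_ne_top hpnetop), one_mul]
end
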